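/- arXiv:2006.14671 — 9 statements merged into one kernel-verified Lean document; each statement's English description precedes it below -/
import Mathlib

section
/- Let n be a positive integer divisible only by primes congruent to 1 modulo 3, let χ : μ_3 → (ℤ/nℤ)ˣ be a group homomorphism, and let d = χ(g) ∈ (ℤ/nℤ)ˣ for a fixed generator g of μ_3. Then χ is balanced if and only if the only element t ∈ ℤ/nℤ with d·t = t is t = 0 (equivalently, the only element of the normal subgroup μ_n of the semidirect product μ_n ⋊_χ μ_3 commuting with the subgroup μ_3 is the identity). -/
lemma aux_dvd (p : ℕ) (hp : p.Prime) (hp3 : p ≠ 3) (r : ℕ) (a : ℤ)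
    (h1 : (p:ℤ) ∣ a - 1) (h3 : (p:ℤ)^r ∣ a^3 - 1) : (p:ℤ)^r ∣ a - 1 := by
  have hpprime : Prime (p:ℤ) := Nat.prime_iff_prime_int.mp hp
  have hnd : ¬ (p:ℤ) ∣ (a^2 + a + 1) := by
    intro hd
    have hd3 : (p:ℤ) ∣ 3 := by
      have key : a^2 + a + 1 - (a - 1) * (a + 2) = 3 := by ring
      exact key ▸ dvd_sub hd (h1.mul_right _)
    have : p ∣ 3 := by exact_mod_cast hd3
    exact hp3 ((Nat.prime_dvd_prime_iff_eq hp Nat.prime_three).mp this)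
  have hco : IsCoprime ((p:ℤ)^r) (a^2 + a + 1) :=
    (hpprime.coprime_iff_not_dvd.mpr hnd).pow_left
  have hfac : a^3 - 1 = (a - 1) * (a^2 + a + 1) := by ring
  exact hco.dvd_of_dvd_mul_right (hfac ▸ h3)

lemma aux_inj {G : Type*} [Group G] (g : Multiplicative (ZMod 3))
    (hg : Subgroup.zpowers g = ⊤) (f : Multiplicative (ZMod 3) →* G) :
    Function.Injective f ↔ f g ≠ 1 := by
  have hgne : g ≠ 1 := by
    rintro rfl
    rw [Subgroup.zpowers_one_eq_bot] at hg
    have : Multiplicative.ofAdd (1 : ZMod 3) ∈ (⊤ : Subgroup (Multiplicative (ZMod 3))) :=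
      Subgroup.mem_top _
    rw [← hg, Subgroup.mem_bot] at this
    exact absurd this (by decide)
  constructor
  · intro hinj hfg
    exact hgne (hinj (by rw [hfg, map_one]))
  · intro hfg
    rw [injective_iff_map_eq_one]
    intro x hx
    by_contra hxne
    have hcard : Nat.card (Multiplicative (ZMod 3)) = 3 := by
      simp [Nat.card_eq_fintype_card]
    have hx3 : orderOf x ∣ 3 := by have := orderOf_dvd_natCard x; rwa [hcard] at this
    have hox : orderOf x = 3 :=
      (Nat.prime_three.eq_one_or_self_of_dvd _ hx3).resolve_left
        (by simpa [orderOf_eq_one_iff] using hxne)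
    have htop : Subgroup.zpowers x = ⊤ := by
      apply Subgroup.eq_top_of_card_eq
      rw [Nat.card_zpowers, hox, hcard]
    have hmem : g ∈ Subgroup.zpowers x := htop ▸ Subgroup.mem_top g
    obtain ⟨k, hk⟩ := hmem
    apply hfg
    rw [← hk, map_zpow, hx, one_zpow]

/-- `χ : μ₃ → (ℤ/nℤ)ˣ` is balanced if for every prime `p ∣ n` the composition of `χ` with the
projection `(ℤ/nℤ)ˣ → (ℤ/p^{r}ℤ)ˣ` (where `p^r` is the exact power of `p` dividing `n`)
is injective. -/
def IsBalanced (n : ℕ) (χ : Multiplicative (ZMod 3) →* (ZMod n)ˣ) : Prop :=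
  ∀ p : ℕ, p.Prime → p ∣ n →
    Function.Injective
      ((Units.map (ZMod.castHom (Nat.ordProj_dvd n p)
        (ZMod (p ^ n.factorization p))).toMonoidHom).comp χ)

/-- Let `n` be a positive integer divisible only by primes congruent to `1` modulo `3`, let
`χ : μ₃ → (ℤ/nℤ)ˣ` be a group homomorphism, and let `d = χ(g)` for a fixed generator `g` of
`μ₃`. Then `χ` is balanced if and only if the only element `t ∈ ℤ/nℤ` with `d·t = t` is
`t = 0` (equivalently, the only element of the normal subgroup `μ_n` of the semidirect product
`μ_n ⋊_χ μ₃` commuting with the subgroup `μ₃` is the identity). -/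
theorem stmt_1 (n : ℕ) (hn : 0 < n) (hdiv : ∀ p : ℕ, p.Prime → p ∣ n → p % 3 = 1)
    (χ : Multiplicative (ZMod 3) →* (ZMod n)ˣ)
    (g : Multiplicative (ZMod 3)) (hg : Subgroup.zpowers g = ⊤) :
    IsBalanced n χ ↔ ∀ t : ZMod n, ((χ g : (ZMod n)ˣ) : ZMod n) * t = t → t = 0 := by
  haveI : NeZero n := ⟨hn.ne'⟩
  set d : (ZMod n)ˣ := χ g with hd
  set a : ℤ := ((d : ZMod n).val : ℤ) with ha
  have hda : ((a : ZMod n)) = (d : ZMod n) := by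
    rw [ha]; push_cast [ZMod.natCast_val, ZMod.cast_id]; ring
  have hg3 : g ^ 3 = 1 := by
    have : ∀ x : Multiplicative (ZMod 3), x ^ 3 = 1 := by decide
    exact this g
  have hd3 : d ^ 3 = 1 := by rw [hd, ← map_pow, hg3, map_one]
  have hn3 : (n:ℤ) ∣ a ^ 3 - 1 := by
    rw [← ZMod.intCast_zmod_eq_zero_iff_dvd]
    push_cast
    rw [hda, ← Units.val_pow_eq_pow_val, hd3, Units.val_one, sub_self]
  -- relate the balanced condition at a prime p to divisibility
  have hcast : ∀ p : ℕ, p.Prime → p ∣ n →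
      ( ¬ Function.Injective
        ((Units.map (ZMod.castHom (Nat.ordProj_dvd n p)
          (ZMod (p ^ n.factorization p))).toMonoidHom).comp χ)
        ↔ (p:ℤ) ^ (n.factorization p) ∣ a - 1) := by
    intro p hp hpn
    haveI : NeZero (p ^ n.factorization p) := ⟨pow_ne_zero _ hp.pos.ne'⟩
    rw [aux_inj g hg, not_not]
    have hval : (((Units.map (ZMod.castHom (Nat.ordProj_dvd n p)
          (ZMod (p ^ n.factorization p))).toMonoidHom).comp χ) g : ZMod (p ^ n.factorization p))
        = ((a : ZMod (p ^ n.factorization p))) := by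
      simp only [MonoidHom.comp_apply, Units.coe_map, RingHom.toMonoidHom_eq_coe,
        MonoidHom.coe_coe, ← hd, ← hda]
      exact map_intCast _ a
    constructor
    · intro h
      have : ((a : ZMod (p ^ n.factorization p))) = 1 := by rw [← hval, h, Units.val_one]
      rw [← sub_eq_zero] at this
      have := (ZMod.intCast_zmod_eq_zero_iff_dvd (a - 1) (p ^ n.factorization p)).mp
        (by push_cast; exact this)
      exact_mod_cast this
    · intro h
      apply Units.ext
      rw [hval, Units.val_one, ← sub_eq_zero]
      have : (((a - 1 : ℤ)) : ZMod (p ^ n.factorization p)) = 0 := by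
        rw [ZMod.intCast_zmod_eq_zero_iff_dvd]
        exact_mod_cast h
      push_cast at this
      exact this
  constructor
  · intro hbal t ht
    have hco : IsCoprime (n:ℤ) (a - 1) := by
      apply isCoprime_of_prime_dvd
      · rintro ⟨h0, -⟩
        exact hn.ne' (by exact_mod_cast h0)
      · intro z hz hzn hza
        have hp : z.natAbs.Prime := Int.prime_iff_natAbs_prime.mp hz
        have hpn : z.natAbs ∣ n := Int.ofNat_dvd.mp (Int.natAbs_dvd.mpr hzn)
        have hpa : (z.natAbs : ℤ) ∣ a - 1 := Int.natAbs_dvd.mpr hza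
        have hp3 : z.natAbs ≠ 3 := by
          intro h; have := hdiv z.natAbs hp hpn; omega
        have hr : (z.natAbs:ℤ) ^ (n.factorization z.natAbs) ∣ a ^ 3 - 1 := by
          refine dvd_trans ?_ hn3
          exact_mod_cast Int.ofNat_dvd.mpr (Nat.ordProj_dvd n z.natAbs)
        have hdd := aux_dvd z.natAbs hp hp3 _ a hpa hr
        exact ((hcast z.natAbs hp hpn).mpr hdd) (hbal z.natAbs hp hpn)
    set b : ℤ := (t.val : ℤ) with hb
    have hbt : ((b : ZMod n)) = t := by
      rw [hb]; push_cast [ZMod.natCast_val, ZMod.cast_id]; ring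
    have hdvd : (n:ℤ) ∣ (a - 1) * b := by
      rw [← ZMod.intCast_zmod_eq_zero_iff_dvd]
      push_cast
      rw [hda, hbt, sub_mul, one_mul, ht, sub_self]
    have : (n:ℤ) ∣ b := hco.dvd_of_dvd_mul_left hdvd
    rw [← hbt, ZMod.intCast_zmod_eq_zero_iff_dvd]
    exact this
  · intro hker p hp hpn
    by_contra hninj
    have hdd := (hcast p hp hpn).mp hninj
    have hdvd : p ^ n.factorization p ∣ n := Nat.ordProj_dvd n p
    have hrpos : 0 < n.factorization p := hp.factorization_pos_of_dvd hn.ne' hpn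
    set m := n / p ^ n.factorization p with hm
    have hmn : p ^ n.factorization p * m = n := Nat.mul_div_cancel' hdvd
    have hmpos : 0 < m := Nat.div_pos (Nat.le_of_dvd hn hdvd) (pow_pos hp.pos _)
    have hmlt : m < n := by
      rw [hm]
      exact Nat.div_lt_self hn (Nat.one_lt_pow hrpos.ne' hp.one_lt)
    have hmz : (m : ZMod n) = 0 := by
      apply hker
      have h0 : (((a - 1) * m : ℤ) : ZMod n) = 0 := by
        rw [ZMod.intCast_zmod_eq_zero_iff_dvd, ← hmn]
        push_cast
        exact mul_dvd_mul hdd dvd_rfl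
      push_cast at h0
      rw [← hda, ← sub_eq_zero]
      linear_combination h0
    rw [ZMod.natCast_eq_zero_iff] at hmz
    have := Nat.le_of_dvd hmpos hmz
    omega
end

section
/- Let n be a positive integer divisible only by primes congruent to 1 modulo 3, let χ : μ_3 → (ℤ/nℤ)ˣ be a group homomorphism that is not balanced, and let G = μ_n ⋊_χ μ_3 be the corresponding semidirect product. Then there exist positive integers n₁ and n₂ with n₁·n₂ = n and n₂ > 1, and a homomorphism χ₁ : μ_3 → (ℤ/n₁ℤ)ˣ, such that G is isomorphic to (μ_{n₁} ⋊_{χ₁} μ_3) × μ_{n₂}. -/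
/-- The action of `(ℤ/nℤ)ˣ` on `μ_n = Multiplicative (ℤ/nℤ)` by multiplication,
identifying `(ℤ/nℤ)ˣ` with `Aut(μ_n)`. -/
def zmodAction (n : ℕ) : (ZMod n)ˣ →* MulAut (Multiplicative (ZMod n)) where
  toFun u := AddEquiv.toMultiplicative (DistribMulAction.toAddAut (ZMod n)ˣ (ZMod n) u)
  map_one' := by ext t; simp
  map_mul' := by intro u v; ext t; simp [mul_smul]

lemma zmodAction_apply (n : ℕ) (u : (ZMod n)ˣ) (m : Multiplicative (ZMod n)) :
    zmodAction n u m = Multiplicative.ofAdd ((u : ZMod n) * m.toAdd) := rfl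

lemma triv3 {H : Type*} [Group H] (f : Multiplicative (ZMod 3) →* H)
    (hf : ¬ Function.Injective f) : ∀ x, f x = 1 := by
  have : ¬ ∀ a b, f a = f b → a = b := hf
  push_neg at this
  obtain ⟨a, b, hab, hne⟩ := this
  set g := a * b⁻¹ with hg
  have hg1 : f g = 1 := by rw [hg, map_mul, hab, map_inv, mul_inv_cancel]
  have hgne : g ≠ 1 := by
    intro h; exact hne (by rwa [mul_inv_eq_one] at h)
  have hcase : ∀ c : ZMod 3, c ≠ 0 → c = 1 ∨ c = 2 := by decide
  have hne0 : g.toAdd ≠ 0 := by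
    intro h; apply hgne
    have : Multiplicative.ofAdd g.toAdd = Multiplicative.ofAdd (0 : ZMod 3) := by rw [h]
    simpa using this
  have hone : f (Multiplicative.ofAdd (1 : ZMod 3)) = 1 := by
    rcases hcase _ hne0 with h | h
    · rw [← h, ofAdd_toAdd, hg1]
    · have : Multiplicative.ofAdd (1 : ZMod 3) = g * g := by
        rw [← ofAdd_toAdd g, ← ofAdd_add, h]; decide
      rw [this, map_mul, hg1, one_mul]
  intro x
  have hx : x = (Multiplicative.ofAdd (1 : ZMod 3)) ^ x.toAdd.val := by
    apply Multiplicative.toAdd.injective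
    simp only [toAdd_pow, toAdd_ofAdd]
    rw [nsmul_eq_mul, mul_one]
    exact (ZMod.natCast_rightInverse x.toAdd).symm
  rw [hx, map_pow, hone, one_pow]

/-- Let `n` be a positive integer divisible only by primes congruent to `1` modulo `3`, let
`χ : μ₃ → (ℤ/nℤ)ˣ` be a group homomorphism that is not balanced, and let `G = μ_n ⋊_χ μ₃` be
the corresponding semidirect product. Then there exist positive integers `n₁` and `n₂` with
`n₁·n₂ = n` and `n₂ > 1`, and a homomorphism `χ₁ : μ₃ → (ℤ/n₁ℤ)ˣ`, such that `G` is isomorphic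
to `(μ_{n₁} ⋊_{χ₁} μ₃) × μ_{n₂}`. -/
theorem stmt_2 (n : ℕ) (hn : 0 < n) (hdiv : ∀ p : ℕ, p.Prime → p ∣ n → p % 3 = 1)
    (χ : Multiplicative (ZMod 3) →* (ZMod n)ˣ) (hχ : ¬ IsBalanced n χ) :
    ∃ (n₁ n₂ : ℕ), 0 < n₁ ∧ 1 < n₂ ∧ n₁ * n₂ = n ∧
      ∃ χ₁ : Multiplicative (ZMod 3) →* (ZMod n₁)ˣ,
        Nonempty
          ((Multiplicative (ZMod n) ⋊[(zmodAction n).comp χ] Multiplicative (ZMod 3)) ≃*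
            (Multiplicative (ZMod n₁) ⋊[(zmodAction n₁).comp χ₁] Multiplicative (ZMod 3)) ×
              Multiplicative (ZMod n₂)) := by
  rw [IsBalanced] at hχ
  push_neg at hχ
  obtain ⟨p, hp, hpn, hinj⟩ := hχ
  set n₂ := p ^ n.factorization p with hn₂
  set n₁ := n / n₂ with hn₁
  have hd₂ : n₂ ∣ n := Nat.ordProj_dvd n p
  have hmul : n₁ * n₂ = n := Nat.div_mul_cancel hd₂
  have hd₁ : n₁ ∣ n := ⟨n₂, hmul.symm⟩
  have hrpos : 0 < n.factorization p := hp.factorization_pos_of_dvd hn.ne' hpn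
  have hn₂gt : 1 < n₂ := Nat.one_lt_pow hrpos.ne' hp.one_lt
  have hn₁pos : 0 < n₁ := Nat.div_pos (Nat.le_of_dvd hn hd₂) (by omega)
  have hcop : Nat.Coprime n₁ n₂ := ((Nat.coprime_ordCompl hp hn.ne').symm).pow_right _
  let e : ZMod n ≃+* ZMod n₁ × ZMod n₂ :=
    (ZMod.ringEquivCongr hmul.symm).trans (ZMod.chineseRemainder hcop)
  have hfst : ∀ x : ZMod n, (e x).1 = ZMod.castHom hd₁ (ZMod n₁) x := by
    intro x
    exact RingHom.congr_fun
      (RingHom.ext_zmod ((RingHom.fst _ _).comp e.toRingHom) (ZMod.castHom hd₁ (ZMod n₁))) x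
  have hsnd : ∀ x : ZMod n, (e x).2 = ZMod.castHom hd₂ (ZMod n₂) x := by
    intro x
    exact RingHom.congr_fun
      (RingHom.ext_zmod ((RingHom.snd _ _).comp e.toRingHom) (ZMod.castHom hd₂ (ZMod n₂))) x
  have htriv := triv3 _ hinj
  have h2 : ∀ t, (e ((χ t : (ZMod n)ˣ) : ZMod n)).2 = 1 := by
    intro t
    rw [hsnd]
    have := htriv t
    have : (Units.map (ZMod.castHom (Nat.ordProj_dvd n p)
        (ZMod (p ^ n.factorization p))).toMonoidHom) (χ t) = 1 := this
    have := congrArg (Units.val) this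
    simpa using this
  set χ₁ : Multiplicative (ZMod 3) →* (ZMod n₁)ˣ :=
    (Units.map (ZMod.castHom hd₁ (ZMod n₁)).toMonoidHom).comp χ with hχ₁
  have h1 : ∀ t, (e ((χ t : (ZMod n)ˣ) : ZMod n)).1 = ((χ₁ t : (ZMod n₁)ˣ) : ZMod n₁) := by
    intro t; rw [hfst]; rfl
  refine ⟨n₁, n₂, hn₁pos, hn₂gt, hmul, χ₁, ⟨?_⟩⟩
  refine
  { toFun := fun g =>
      (⟨Multiplicative.ofAdd (e g.left.toAdd).1, g.right⟩,
       Multiplicative.ofAdd (e g.left.toAdd).2)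
    invFun := fun g =>
      ⟨Multiplicative.ofAdd (e.symm (g.1.left.toAdd, g.2.toAdd)), g.1.right⟩
    left_inv := ?_
    right_inv := ?_
    map_mul' := ?_ }
  · intro g
    ext
    · simp
    · simp
  · intro g
    refine Prod.ext ?_ ?_
    · ext
      · simp
      · simp
    · simp
  · intro a b
    refine Prod.ext ?_ ?_
    · ext
      · show Multiplicative.toAdd (Multiplicative.ofAdd (e ((a * b).left).toAdd).1) = _
        simp only [SemidirectProduct.mul_left, MonoidHom.comp_apply, zmodAction_apply,
          toAdd_mul, toAdd_ofAdd, map_add, map_mul, Prod.fst_add, Prod.fst_mul, h1,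
          SemidirectProduct.mul_right]
      · rfl
    · show Multiplicative.ofAdd (e ((a * b).left).toAdd).2 = _
      simp only [SemidirectProduct.mul_left, MonoidHom.comp_apply, zmodAction_apply,
        toAdd_mul, toAdd_ofAdd, map_add, map_mul, Prod.snd_add, Prod.snd_mul, h2, one_mul]
      rfl
end

section
/- Let G be a finite group that contains no element of order 9, and let H be a normal subgroup of index 3 in G. Then there exists a subgroup F of G of order 3 such that H ∩ F is trivial and H·F = G; in other words, G is an internal semidirect product of H and a cyclic group of order 3 (G ≅ H ⋊ μ_3). -/
/-!
A Sylow `p`-subgroup cannot lie in a subgroup of index `p`, so it contains some `x ∉ H`. The order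
of `x` is a power of `p`; it is not `1` since `x ≠ 1`, and it is not divisible by `p ^ 2`, as
otherwise a power of `x` would have order `p ^ 2`. So `x` has order `p`, and `⟨x⟩` meets `H`
trivially and has the complementary order `p = [G : H]`.
-/

open scoped Pointwise

namespace Subgroup

variable {G : Type*} [Group G]

theorem disjoint_of_prime_card_of_not_le {H K : Subgroup G} (hK : (Nat.card K).Prime)
    (hKH : ¬ K ≤ H) : Disjoint H K := by
  have : Finite K := Nat.finite_of_card_ne_zero hK.ne_zero
  rcases (Nat.dvd_prime hK).mp (card_dvd_of_le (inf_le_right : H ⊓ K ≤ K)) with h | h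
  · exact disjoint_iff.mpr (card_eq_one.mp h)
  · have : H ⊓ K = K := eq_of_le_of_card_ge inf_le_right h.ge
    exact absurd (this ▸ inf_le_left) hKH

theorem isComplement'_zpowers_of_index_eq_orderOf [Finite G] {H : Subgroup G} {x : G}
    (hx : orderOf x = H.index) (hp : H.index.Prime) (hxH : x ∉ H) :
    IsComplement' H (zpowers x) := by
  refine isComplement'_of_card_mul_and_disjoint ?_
    (disjoint_of_prime_card_of_not_le ?_ (by simpa [zpowers_le] using hxH))
  · rw [Nat.card_zpowers, hx, card_mul_index]
  · rwa [Nat.card_zpowers, hx]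

end Subgroup

theorem not_dvd_orderOf_of_forall_orderOf_ne {G : Type*} [Group G] [Finite G] {n : ℕ}
    (h : ∀ g : G, orderOf g ≠ n) (g : G) : ¬ n ∣ orderOf g :=
  fun hn => h _ (orderOf_pow_orderOf_div (orderOf_pos g).ne' hn)

theorem Sylow.not_le_of_dvd_index {G : Type*} [Group G] [Finite G] {p : ℕ} [Fact p.Prime]
    (P : Sylow p G) {H : Subgroup G} (hH : p ∣ H.index) : ¬ (P : Subgroup G) ≤ H :=
  fun hle => P.not_dvd_index (hH.trans (Subgroup.index_dvd_of_le hle))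

theorem exists_orderOf_eq_prime_notMem_of_index_eq {G : Type*} [Group G] [Finite G] {p : ℕ}
    [Fact p.Prime] (hsq : ∀ g : G, orderOf g ≠ p ^ 2) {H : Subgroup G} (hH : H.index = p) :
    ∃ x : G, orderOf x = p ∧ x ∉ H := by
  obtain ⟨P⟩ := (inferInstance : Nonempty (Sylow p G))
  obtain ⟨x, hxP, hxH⟩ := SetLike.not_le_iff_exists.mp (P.not_le_of_dvd_index hH.symm.dvd)
  obtain ⟨k, hk⟩ := P.isPGroup'.exists_orderOf_eq_pow (⟨x, hxP⟩ : P)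
  rw [Subgroup.orderOf_mk] at hk
  have hk0 : k ≠ 0 := by
    rintro rfl
    exact hxH (orderOf_eq_one_iff.mp (by simpa using hk) ▸ H.one_mem)
  have hk2 : k < 2 := by
    by_contra! h
    exact not_dvd_orderOf_of_forall_orderOf_ne hsq x (hk ▸ pow_dvd_pow p h)
  exact ⟨x, by rw [hk, show k = 1 by omega, pow_one], hxH⟩

theorem stmt_4_general (G : Type) [Group G] [Finite G] (h9 : ∀ g : G, orderOf g ≠ 9)
    (H : Subgroup G) (hH : H.index = 3) :
    ∃ F : Subgroup G, Nat.card F = 3 ∧ H ⊓ F = ⊥ ∧ (H : Set G) * (F : Set G) = Set.univ := by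
  obtain ⟨x, hx, hxH⟩ := exists_orderOf_eq_prime_notMem_of_index_eq (p := 3) h9 hH
  have hF : H.IsComplement' (Subgroup.zpowers x) :=
    Subgroup.isComplement'_zpowers_of_index_eq_orderOf (hx.trans hH.symm)
      (hH ▸ Nat.prime_three) hxH
  exact ⟨_, by rw [Nat.card_zpowers, hx], disjoint_iff.mp hF.disjoint, hF.mul_eq⟩

/-- Let `G` be a finite group that contains no element of order `9`, and let `H` be a normal
subgroup of index `3` in `G`. Then there exists a subgroup `F` of `G` of order `3` such that
`H ∩ F` is trivial and `H·F = G`; in other words, `G` is an internal semidirect product of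
`H` and a cyclic group of order `3` (`G ≅ H ⋊ μ₃`). -/
theorem stmt_4 (G : Type) [Group G] [Finite G] (h9 : ∀ g : G, orderOf g ≠ 9)
    (H : Subgroup G) [H.Normal] (hH : H.index = 3) :
    ∃ F : Subgroup G, Nat.card F = 3 ∧ H ⊓ F = ⊥ ∧ (H : Set G) * (F : Set G) = Set.univ :=
  stmt_4_general G h9 H hH
end

section
/- Let n₁ and n₂ be coprime positive integers, let ξ₁ and ξ₂ be primitive roots of unity of degrees n₁ and n₂ respectively, and set M = ℚ(ξ₁). Then M(ξ₂)/M is a Galois extension and its Galois group Gal(M(ξ₂)/M) is isomorphic to (ℤ/n₂ℤ)ˣ. -/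
/-!
Since `n₁` and `n₂` are coprime, `L` contains a primitive `n₁ n₂`-th root of unity, so
`[L : ℚ] ≥ φ(n₁ n₂) = φ(n₁) φ(n₂)`; as `[M : ℚ] = φ(n₁)`, this gives `[L : M] ≥ φ(n₂)`.
The minimal polynomial of `ξ₂` over `M` divides `Φ_{n₂}` and has degree `[L : M]`, so it equals
`Φ_{n₂}`, which is therefore irreducible over `M`; the Galois group of the cyclotomic extension
`L/M` is then `(ℤ/n₂ℤ)ˣ`.
-/

open Polynomial

namespace IsCyclotomicExtension

theorem irreducible_cyclotomic_of_totient_le_finrank {K L : Type*} [Field K] [Field L]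
    [Algebra K L] (n : ℕ) [NeZero n] [IsCyclotomicExtension {n} K L]
    (h : n.totient ≤ Module.finrank K L) : Irreducible (cyclotomic n K) := by
  have hζ := zeta_spec n K L
  have hint : IsIntegral K (zeta n K L) := (integral {n} K L).isIntegral _
  have hdvd : minpoly K (zeta n K L) ∣ cyclotomic n K := by
    refine minpoly.dvd K _ ?_
    rw [aeval_def, eval₂_eq_eval_map, map_cyclotomic, ← IsRoot.def]
    exact hζ.isRoot_cyclotomic (NeZero.pos n)
  have hdeg : Module.finrank K L = (minpoly K (zeta n K L)).natDegree := by
    rw [(hζ.powerBasis K).finrank, IsPrimitiveRoot.powerBasis_dim]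
  rw [eq_of_monic_of_dvd_of_natDegree_le (minpoly.monic hint) (cyclotomic.monic n K) hdvd
    (by rwa [natDegree_cyclotomic, ← hdeg])]
  exact minpoly.irreducible hint

theorem totient_le_finrank_of_coprime {n₁ n₂ : ℕ} [NeZero n₁] [NeZero n₂]
    (hco : n₁.Coprime n₂) (M L : Type*) [Field M] [Field L] [Algebra ℚ M] [Algebra M L]
    [IsCyclotomicExtension {n₁} ℚ M] [IsCyclotomicExtension {n₂} M L] :
    n₂.totient ≤ Module.finrank M L := by
  have : CharZero M := charZero_of_injective_algebraMap (algebraMap ℚ M).injective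
  have : FiniteDimensional ℚ M := finiteDimensional {n₁} ℚ M
  have : CharZero L := charZero_of_injective_algebraMap (algebraMap M L).injective
  have : FiniteDimensional M L := finiteDimensional {n₂} M L
  have : FiniteDimensional ℚ L := .trans ℚ M L
  have hζ₁ := (zeta_spec n₁ ℚ M).map_of_injective (algebraMap M L).injective
  have hirr : Irreducible (cyclotomic (n₁.lcm n₂) ℚ) :=
    cyclotomic.irreducible_rat (Nat.lcm_pos (NeZero.pos n₁) (NeZero.pos n₂))
  have key := hζ₁.lcm_totient_le_finrank (zeta_spec n₂ M L) hirr
  rw [hco.lcm_eq_mul, Nat.totient_mul hco, ← Module.finrank_mul_finrank ℚ M L,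
    finrank M (cyclotomic.irreducible_rat (NeZero.pos n₁))] at key
  exact Nat.le_of_mul_le_mul_left key (Nat.totient_pos.2 (NeZero.pos n₁))

end IsCyclotomicExtension

/-- Let `n₁` and `n₂` be coprime positive integers, let `ξ₁`, `ξ₂` be primitive roots of unity
of degrees `n₁`, `n₂` respectively, and set `M = ℚ(ξ₁)` (i.e. `M` is the `n₁`-st cyclotomic
extension of `ℚ`), and let `L = M(ξ₂)` (i.e. `L` is the `n₂`-nd cyclotomic extension of `M`).
Then `L/M` is a Galois extension and `Gal(L/M) ≅ (ℤ/n₂ℤ)ˣ`. -/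
theorem stmt_5 (n₁ n₂ : ℕ+) (hco : Nat.Coprime (n₁ : ℕ) (n₂ : ℕ))
    (M L : Type) [Field M] [Field L] [Algebra ℚ M] [Algebra M L]
    [IsCyclotomicExtension {(n₁ : ℕ)} ℚ M] [IsCyclotomicExtension {(n₂ : ℕ)} M L] :
    IsGalois M L ∧ Nonempty ((L ≃ₐ[M] L) ≃* (ZMod (n₂ : ℕ))ˣ) :=
  ⟨IsCyclotomicExtension.isGalois {(n₂ : ℕ)} M L,
    ⟨IsCyclotomicExtension.autEquivPow L <|
      IsCyclotomicExtension.irreducible_cyclotomic_of_totient_le_finrank (L := L) (n₂ : ℕ)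
        (IsCyclotomicExtension.totient_le_finrank_of_coprime hco M L)⟩⟩
end

section
/- Let K be a field of characteristic zero, let A be an associative unital K-algebra which is a division ring with center equal to K and of dimension 9 over K, and let p be a prime number with p ≡ 2 (mod 3). Then every nonzero element x ∈ A with x^p lying in the image of the structure map K → A itself lies in the image of K → A. (Equivalently, the group Aˣ/Kˣ contains no element of order p, i.e., the automorphism group of a non-trivial Severi–Brauer surface over K contains no element of order p.) -/
/-!
If `x ∈ A` has minimal polynomial of degree `d`, then `A` is a vector space over the field
`K(x) ≅ K[X] ⧸ (minpoly K x)`, so `d ∣ [A : K]`. Suppose `x ^ p = a ∈ K`. If `a` is not a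
`p`-th power in `K`, then `X ^ p - a` is irreducible, so `d = p`. Otherwise `a = b ^ p` and
`x / b` is a root of unity of order dividing `p`; it generates a cyclotomic extension of `K`,
whose Galois group embeds into `(ℤ/p)ˣ`, so `d ∣ p - 1`. When `[A : K]` is coprime to both `p`
and `p - 1` (for `[A : K] = 9` this means `p ≢ 0, 1 mod 3`), this forces `d = 1`.
-/

open Polynomial Module

theorem IsCyclotomicExtension.finrank_dvd_totient (n : ℕ) [NeZero n] (K L : Type*) [Field K]
    [Field L] [Algebra K L] [IsCyclotomicExtension {n} K L] : Module.finrank K L ∣ n.totient := by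
  have := IsCyclotomicExtension.finiteDimensional {n} K L
  have := IsCyclotomicExtension.isGalois {n} K L
  rw [← IsGalois.card_aut_eq_finrank, ← ZMod.card_units_eq_totient, ← Nat.card_eq_fintype_card]
  exact Subgroup.card_dvd_of_injective _ ((zeta_spec n K L).autToPow_injective K)

theorem AlgHom.finrank_dvd_finrank {K L A : Type*} [Field K] [DivisionRing L] [Ring A]
    [Algebra K L] [Algebra K A] (f : L →ₐ[K] A) : finrank K L ∣ finrank K A := by
  let _ : Module L A := Module.compHom A f.toRingHom
  have : IsScalarTower K L A := ⟨fun k l a => by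
    change f (k • l) * a = k • (f l * a)
    rw [map_smul, smul_mul_assoc]⟩
  exact Dvd.intro _ (Module.finrank_mul_finrank K L A)

namespace minpoly

variable {K A : Type*}

section Lift

variable [CommRing K] [Ring A] [Algebra K A]

variable (K) in
/-- `AdjoinRoot.liftAlgHom` needs a commutative target. -/
noncomputable def adjoinRootLift (z : A) : AdjoinRoot (minpoly K z) →ₐ[K] A :=
  Ideal.Quotient.liftₐ _ (Polynomial.aeval z) fun q hq => by
    obtain ⟨c, rfl⟩ := Ideal.mem_span_singleton'.mp hq
    simp

@[simp]
theorem adjoinRootLift_root (z : A) : adjoinRootLift K z (AdjoinRoot.root _) = z :=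
  (Ideal.Quotient.lift_mk _ _ _).trans (aeval_X z)

end Lift

variable [Field K] [DivisionRing A] [Algebra K A]

theorem natDegree_dvd_finrank [FiniteDimensional K A] (z : A) :
    (minpoly K z).natDegree ∣ finrank K A := by
  have hz : IsIntegral K z := .of_finite K z
  have := Fact.mk (minpoly.irreducible hz)
  rw [← AdjoinRoot.powerBasis_dim (minpoly.ne_zero hz), ← PowerBasis.finrank]
  exact (adjoinRootLift K z).finrank_dvd_finrank

theorem natDegree_dvd_totient_of_pow_eq_one {n : ℕ} [NeZero n] {y : A} (hy : y ^ n = 1) :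
    (minpoly K y).natDegree ∣ n.totient := by
  have hint : IsIntegral K y :=
    ⟨X ^ n - 1, monic_X_pow_sub_C 1 (NeZero.ne n), by simp [hy]⟩
  have := Fact.mk (minpoly.irreducible hint)
  let ζ := AdjoinRoot.root (minpoly K y)
  have hζ : ζ ^ n = 1 := by
    apply (adjoinRootLift K y).toRingHom.injective
    change adjoinRootLift K y (ζ ^ n) = adjoinRootLift K y 1
    rw [map_pow, map_one, adjoinRootLift_root, hy]
  have : NeZero (orderOf ζ) :=
    ⟨(orderOf_pos_iff.mpr (isOfFinOrder_iff_pow_eq_one.mpr ⟨n, NeZero.pos n, hζ⟩)).ne'⟩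
  have : IsCyclotomicExtension {orderOf ζ} K (AdjoinRoot (minpoly K y)) := by
    refine (IsCyclotomicExtension.iff_singleton _ _ _).mpr ⟨⟨ζ, .orderOf ζ⟩, fun t => ?_⟩
    have hle : Algebra.adjoin K {ζ} ≤ Algebra.adjoin K {b | b ^ orderOf ζ = 1} :=
      Algebra.adjoin_mono (Set.singleton_subset_iff.mpr (pow_orderOf_eq_one ζ))
    exact hle ((AdjoinRoot.adjoinRoot_eq_top (f := minpoly K y)).symm ▸ Algebra.mem_top)
  rw [← AdjoinRoot.powerBasis_dim (minpoly.ne_zero hint), ← PowerBasis.finrank]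
  exact (IsCyclotomicExtension.finrank_dvd_totient _ K _).trans
    (Nat.totient_dvd_of_dvd (orderOf_dvd_of_pow_eq_one hζ))

end minpoly

section

variable {K A : Type*} [Field K] [DivisionRing A] [Algebra K A] [FiniteDimensional K A]

theorem mem_range_algebraMap_of_natDegree_minpoly_dvd {m : ℕ} (hm : (finrank K A).Coprime m)
    {z : A} (hz : (minpoly K z).natDegree ∣ m) : z ∈ Set.range (algebraMap K A) :=
  minpoly.natDegree_eq_one_iff.mp <|
    Nat.eq_one_of_dvd_coprimes hm (minpoly.natDegree_dvd_finrank z) hz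

theorem mem_range_algebraMap_of_pow_mem_range {p : ℕ} (hp : p.Prime)
    (hp_coprime : (finrank K A).Coprime p) (hp_sub_one_coprime : (finrank K A).Coprime (p - 1))
    {x : A}
    (hx : x ^ p ∈ Set.range (algebraMap K A)) : x ∈ Set.range (algebraMap K A) := by
  obtain ⟨a, ha⟩ := hx
  by_cases hroot : ∃ b : K, b ^ p = a
  · obtain ⟨b, rfl⟩ := hroot
    rcases eq_or_ne b 0 with rfl | hb
    · have : x = 0 := pow_eq_zero_iff hp.ne_zero |>.mp (by simpa [hp.ne_zero] using ha.symm)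
      exact ⟨0, by simp [this]⟩
    set y := algebraMap K A b⁻¹ * x
    have hy : y ^ p = 1 := by
      rw [(Algebra.commute_algebraMap_left b⁻¹ x).mul_pow, ← map_pow, ← ha, ← map_mul, inv_pow,
        inv_mul_cancel₀ (pow_ne_zero p hb), map_one]
    have : NeZero p := ⟨hp.ne_zero⟩
    obtain ⟨c, hc⟩ := mem_range_algebraMap_of_natDegree_minpoly_dvd hp_sub_one_coprime
      (Nat.totient_prime hp ▸ minpoly.natDegree_dvd_totient_of_pow_eq_one hy)
    refine ⟨b * c, ?_⟩
    rw [map_mul, hc, ← mul_assoc, ← map_mul, mul_inv_cancel₀ hb, map_one, one_mul]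
  · push Not at hroot
    have hmin : X ^ p - C a = minpoly K x :=
      minpoly.eq_of_irreducible_of_monic (X_pow_sub_C_irreducible_of_prime hp hroot)
        (by simp [← ha]) (monic_X_pow_sub_C a hp.ne_zero)
    refine mem_range_algebraMap_of_natDegree_minpoly_dvd hp_coprime ?_
    rw [← hmin, natDegree_X_pow_sub_C]

end

theorem stmt_10_general (K : Type) [Field K]
    (A : Type) [DivisionRing A] [Algebra K A]
    (hrank : Module.finrank K A = 9)
    (p : ℕ) (hp : p.Prime) (hp2 : p % 3 = 2)
    (x : A) (hxp : x ^ p ∈ Set.range (algebraMap K A)) :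
    x ∈ Set.range (algebraMap K A) := by
  have : FiniteDimensional K A := Module.finite_of_finrank_eq_succ hrank
  have coprime_nine {m : ℕ} (hm : ¬3 ∣ m) : (9 : ℕ).Coprime m :=
    Nat.Coprime.pow_left 2 ((Nat.Prime.coprime_iff_not_dvd Nat.prime_three).mpr hm)
  refine mem_range_algebraMap_of_pow_mem_range hp ?_ ?_ hxp <;> rw [hrank] <;>
    exact coprime_nine (by omega)

/-- Let `K` be a field of characteristic zero, let `A` be a central division algebra of
dimension `9` over `K`, and let `p` be a prime number with `p ≡ 2 (mod 3)`. Then every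
nonzero element `x ∈ A` with `x^p` lying in the image of the structure map `K → A` itself
lies in the image of `K → A`. (Equivalently, the group `Aˣ/Kˣ`, i.e. the automorphism group
of the non-trivial Severi–Brauer surface corresponding to `A`, contains no element of
order `p`.) -/
theorem stmt_10 (K : Type) [Field K] [CharZero K]
    (A : Type) [DivisionRing A] [Algebra K A]
    (hcenter : Subalgebra.center K A = ⊥) (hrank : Module.finrank K A = 9)
    (p : ℕ) (hp : p.Prime) (hp2 : p % 3 = 2)
    (x : A) (hx : x ≠ 0) (hxp : x ^ p ∈ Set.range (algebraMap K A)) :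
    x ∈ Set.range (algebraMap K A) :=
  stmt_10_general K A hrank p hp hp2 x hxp
end

section
/- Let K be a field of characteristic zero, and let A be an associative unital K-algebra which is a division ring with center equal to K and of dimension 9 over K. Then for every nonzero element x ∈ A such that x^9 lies in the image of the structure map K → A, already x^3 lies in the image of K → A. (Equivalently, the group Aˣ/Kˣ contains no element of order 9, i.e., the automorphism group of a non-trivial Severi–Brauer surface over K contains no element of order 9.) -/
open Polynomial IntermediateField Module

/-- Field-theoretic core: in a degree-3 field extension `F/K` (char 0), any nonzero `y`
with `y ^ 9 ∈ K` already satisfies `y ^ 3 ∈ K`. -/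
lemma aux_deg3 (K F : Type*) [Field K] [CharZero K] [Field F] [Algebra K F]
    (h3 : Module.finrank K F = 3) (y : F) (hy : y ≠ 0) (a : K)
    (hy9 : y ^ 9 = algebraMap K F a) : y ^ 3 ∈ Set.range (algebraMap K F) := by
  by_contra hu
  have hFD : FiniteDimensional K F := .of_finrank_pos (by omega)
  have hint : ∀ z : F, IsIntegral K z := fun z => IsIntegral.of_finite K z
  set u := y ^ 3 with hudef
  have ha0 : a ≠ 0 := by
    rintro rfl
    exact pow_ne_zero 9 hy (by rw [hy9, map_zero])
  have hu3 : u ^ 3 = algebraMap K F a := by rw [hudef, ← pow_mul]; exact hy9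
  -- the minimal polynomial of `u` is `X ^ 3 - C a`
  have hm3 : (minpoly K u).natDegree = 3 := by
    have hmd : (minpoly K u).natDegree ∣ 3 := h3 ▸ minpoly.degree_dvd (hint u)
    rcases Nat.prime_three.eq_one_or_self_of_dvd _ hmd with h | h
    · exfalso
      have hdeg : (minpoly K u).degree = 1 := by
        rw [degree_eq_natDegree (minpoly.ne_zero (hint u)), h]; rfl
      obtain ⟨c, hc⟩ := minpoly.degree_eq_one_iff.mp hdeg
      exact hu ⟨c, hc⟩
    · exact h
  have hmin : (X ^ 3 - C a : K[X]) = minpoly K u := by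
    refine eq_of_monic_of_dvd_of_natDegree_le (minpoly.monic (hint u))
      (monic_X_pow_sub_C a (by norm_num)) ?_ ?_
    · exact minpoly.dvd K u (by simp [hu3])
    · rw [natDegree_X_pow_sub_C, hm3]
  -- hence the norm of `u` equals `a`
  have hfr1 : Module.finrank (↥K⟮u⟯) F = 1 := by
    have h := Module.finrank_mul_finrank K (↥K⟮u⟯) F
    rw [IntermediateField.adjoin.finrank (hint u), hm3, h3] at h
    omega
  have hnu : Algebra.norm K u = a := by
    rw [Algebra.norm_eq_norm_adjoin K u, hfr1, pow_one,
      ← IntermediateField.adjoin.powerBasis_gen (hint u),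
      Algebra.PowerBasis.norm_gen_eq_coeff_zero_minpoly,
      IntermediateField.adjoin.powerBasis_gen, IntermediateField.adjoin.powerBasis_dim,
      minpoly_gen, hm3, ← hmin]
    simp
    ring
  -- so `a` is the cube of `b`, the norm of `y`
  set b := Algebra.norm K y with hbdef
  have hb3 : b ^ 3 = a := by rw [hbdef, ← map_pow, ← hudef, hnu]
  have hb0 : b ≠ 0 := by
    rw [hbdef, Algebra.norm_ne_zero_iff]; exact hy
  have hab : algebraMap K F b ≠ 0 := fun h => hb0 ((_root_.map_eq_zero (algebraMap K F)).mp h)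
  -- the element w = u / b is a cube root of unity different from 1
  set w := u * (algebraMap K F b)⁻¹ with hwdef
  have hw3 : w ^ 3 = 1 := by
    rw [hwdef, mul_pow, inv_pow, ← map_pow, hb3, hu3]
    exact mul_inv_cancel₀ (by simpa using ha0)
  have hw1 : w ≠ 1 := by
    intro h
    rw [hwdef, mul_inv_eq_one₀ hab] at h
    exact hu ⟨b, h.symm⟩
  have hq : w ^ 2 + w + 1 = 0 := by
    have hfac : (w - 1) * (w ^ 2 + w + 1) = w ^ 3 - 1 := by ring
    rw [hw3, sub_self] at hfac
    rcases mul_eq_zero.mp hfac with h | h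
    · exact absurd (sub_eq_zero.mp h) hw1
    · exact h
  -- hence w lies in K, so u = w * b ∈ K, contradiction
  have hq2 : (X ^ 2 + X + 1 : K[X]).natDegree = 2 := by compute_degree!
  have hwdeg : (minpoly K w).natDegree = 1 := by
    have hdvd : minpoly K w ∣ (X ^ 2 + X + 1 : K[X]) := minpoly.dvd K w (by simpa using hq)
    have hne : (X ^ 2 + X + 1 : K[X]) ≠ 0 := fun h => by rw [h] at hq2; simp at hq2
    have hle : (minpoly K w).natDegree ≤ 2 := hq2 ▸ natDegree_le_of_dvd hdvd hne
    have hd3 : (minpoly K w).natDegree ∣ 3 := h3 ▸ minpoly.degree_dvd (hint w)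
    rcases Nat.prime_three.eq_one_or_self_of_dvd _ hd3 with h | h
    · exact h
    · omega
  have hdeg1 : (minpoly K w).degree = 1 := by
    rw [degree_eq_natDegree (minpoly.ne_zero (hint w)), hwdeg]; rfl
  obtain ⟨c, hc⟩ := minpoly.degree_eq_one_iff.mp hdeg1
  refine hu ⟨c * b, ?_⟩
  rw [map_mul, hc, hwdef]
  exact inv_mul_cancel_right₀ hab u

/-- Let `K` be a field of characteristic zero and let `A` be a central division algebra of
dimension `9` over `K`. Then for every nonzero element `x ∈ A` such that `x^9` lies in the
image of the structure map `K → A`, already `x^3` lies in the image of `K → A`.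
(Equivalently, the group `Aˣ/Kˣ`, i.e. the automorphism group of the non-trivial
Severi–Brauer surface corresponding to `A`, contains no element of order `9`.) -/
theorem stmt_11 (K : Type) [Field K] [CharZero K]
    (A : Type) [DivisionRing A] [Algebra K A]
    (hcenter : Subalgebra.center K A = ⊥) (hrank : Module.finrank K A = 9)
    (x : A) (hx : x ≠ 0) (hx9 : x ^ 9 ∈ Set.range (algebraMap K A)) :
    x ^ 3 ∈ Set.range (algebraMap K A) := by
  obtain ⟨a, ha⟩ := hx9
  have hFDA : FiniteDimensional K A := .of_finrank_pos (by rw [hrank]; norm_num)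
  set F := Algebra.adjoin K {x} with hFdef
  letI : CommRing F :=
    Algebra.adjoinCommRingOfComm K (by rintro a rfl b rfl; rfl)
  haveI hFDF : FiniteDimensional K F :=
    FiniteDimensional.of_injective F.val.toLinearMap Subtype.val_injective
  haveI : Algebra.IsIntegral K F := Algebra.IsIntegral.of_finite K F
  letI : Field F := (isField_of_isIntegral_of_isField' (Field.toIsField K)).toField
  have hxF : x ∈ F := Algebra.self_mem_adjoin_singleton K x
  have htower : Module.finrank K F * Module.finrank F A = 9 := by
    rw [Module.finrank_mul_finrank, hrank]
  have hd : Module.finrank K F ∣ 9 := ⟨Module.finrank F A, htower.symm⟩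
  have h139 : Module.finrank K F = 1 ∨ Module.finrank K F = 3 ∨ Module.finrank K F = 9 := by
    have hle : Module.finrank K F ≤ 9 := Nat.le_of_dvd (by norm_num) hd
    interval_cases h : Module.finrank K ↥F <;> revert hd <;> decide
  rcases h139 with h1 | h3 | h9
  · -- x itself lies in K
    have hbot : F = ⊥ := Subalgebra.eq_bot_of_finrank_one h1
    rw [hbot] at hxF
    obtain ⟨c, hc⟩ := Algebra.mem_bot.mp hxF
    exact ⟨c ^ 3, by rw [map_pow, hc]⟩
  · -- the degree-3 case: use the field-theoretic lemma in F
    set x' : F := ⟨x, hxF⟩ with hx'def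
    have hx'0 : x' ≠ 0 := fun h => hx (congrArg Subtype.val h)
    have hx'9 : x' ^ 9 = algebraMap K F a := by
      apply Subtype.ext
      rw [SubmonoidClass.coe_pow]
      simpa using ha.symm
    obtain ⟨c, hc⟩ := aux_deg3 K F h3 x' hx'0 a hx'9
    refine ⟨c, ?_⟩
    have := congrArg Subtype.val hc
    rw [SubmonoidClass.coe_pow] at this
    simpa using this
  · -- F = A, so A is commutative and x is central, hence in K
    have hFtop : Subalgebra.toSubmodule F = ⊤ :=
      Submodule.eq_top_of_finrank_eq (by rw [hrank]; exact h9)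
    have hcent : x ∈ Subalgebra.center K A := by
      rw [Subalgebra.mem_center_iff]
      intro b
      have hb : b ∈ F := by
        rw [← Subalgebra.mem_toSubmodule, hFtop]; trivial
      exact ((Algebra.commute_of_mem_adjoin_self hb).symm).eq
    rw [hcenter] at hcent
    obtain ⟨c, hc⟩ := Algebra.mem_bot.mp hcent
    exact ⟨c ^ 3, by rw [map_pow, hc]⟩
end

section
/- Let k be an algebraically closed field of characteristic zero, let p be a prime number, and let Ǧ be a subgroup of GL₃(k) isomorphic to μ_p × μ_p which contains no non-trivial scalar matrix. Then there exists an element g ∈ Ǧ which is not a scalar matrix and which has an eigenvalue λ ∈ k whose eigenspace {v ∈ k³ : g·v = λ·v} has dimension 2. (Geometrically: the image of g in PGL₃(k) acts on ℙ² with fixed locus a line together with a unique isolated point.) -/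
/-!
Suppose no non-scalar element of `Ǧ` has a two-dimensional eigenspace; since `Ǧ` meets the
scalars trivially, every `g ≠ 1` then has only one-dimensional eigenspaces. A non-trivial `g₀`
has finite order, so it is diagonalizable in characteristic zero and, not being scalar, has
eigenvectors `v₁, v₂` for distinct eigenvalues. Their eigenlines are preserved by the abelian
group `Ǧ`, which therefore acts on them through characters `χ₁, χ₂`. If `χ₁ g = χ₂ g`, then
`v₁` and `v₂` lie in one eigenspace of `g`, which forces `g = 1`; so `χ₁ / χ₂` embeds `Ǧ`
into `kˣ` and `Ǧ` is cyclic, which `μ_p × μ_p` is not.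
-/

open Module Module.End Polynomial

namespace Module.End

variable {K V : Type*} [Field K] [AddCommGroup V] [Module K V]

theorem isSemisimple_of_pow_eq_one {f : End K V} {n : ℕ} (hn : (n : K) ≠ 0) (hf : f ^ n = 1) :
    f.IsSemisimple :=
  isSemisimple_of_squarefree_aeval_eq_zero
    (separable_X_pow_sub_C 1 hn one_ne_zero).squarefree (by simp [hf])

theorem exists_hasEigenvalue_ne_of_isSemisimple [IsAlgClosed K] [FiniteDimensional K V]
    {f : End K V} (hf : f.IsSemisimple) (hscalar : ∀ μ, f.eigenspace μ ≠ ⊤) :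
    ∃ μ ν, μ ≠ ν ∧ f.HasEigenvalue μ ∧ f.HasEigenvalue ν := by
  have : Nontrivial V := by
    by_contra hV
    rw [not_nontrivial_iff_subsingleton] at hV
    exact hscalar 0 (Subsingleton.elim _ _)
  obtain ⟨μ, hμ⟩ := f.exists_eigenvalue
  by_contra! h
  refine hscalar μ (top_le_iff.mp ?_)
  rw [← hf.iSup_eigenspace_eq_top]
  refine iSup_le fun ν => ?_
  rcases eq_or_ne μ ν with rfl | hne
  · exact le_rfl
  · have := h μ ν hne hμ
    rw [hasEigenvalue_iff, not_not] at this
    simp [this]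

theorem exists_smul_of_commute_of_finrank_eigenspace_le_one [FiniteDimensional K V]
    {f g : End K V} (hfg : Commute f g) {μ : K} (hμ : finrank K (f.eigenspace μ) ≤ 1) {v : V}
    (hv : f.HasEigenvector μ v) : ∃ c : K, g v = c • v := by
  have hspan : f.eigenspace μ = K ∙ v :=
    (Submodule.eq_of_le_of_finrank_le ((Submodule.span_singleton_le_iff_mem _ _).mpr hv.1)
      (by rwa [finrank_span_singleton hv.2])).symm
  have hgv : g v ∈ f.eigenspace μ := mapsTo_genEigenspace_of_comm hfg μ 1 hv.1
  rw [hspan, Submodule.mem_span_singleton] at hgv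
  obtain ⟨c, hc⟩ := hgv
  exact ⟨c, hc.symm⟩

end Module.End

theorem Matrix.eq_smul_one_of_eigenspace_mulVecLin_eq_top {K n : Type*} [Field K] [Fintype n]
    [DecidableEq n] {A : Matrix n n K} {μ : K} (h : eigenspace A.mulVecLin μ = ⊤) :
    A = μ • 1 := by
  rw [eigenspace_def, LinearMap.ker_eq_top, sub_eq_zero] at h
  apply Matrix.toLin'.injective
  rw [Matrix.toLin'_apply', h, map_smul, Matrix.toLin'_one]
  rfl

namespace Representation

variable {K G V : Type*} [Field K] [AddCommGroup V] [Module K V]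

def charOfEigenvector [Monoid G] (ρ : Representation K G V) {v : V} (hv : v ≠ 0) {c : G → K}
    (hc : ∀ g, ρ g v = c g • v) : G →* K where
  toFun := c
  map_one' := smul_left_injective K hv <| by
    change c 1 • v = (1 : K) • v
    rw [← hc, map_one, Module.End.one_apply, one_smul]
  map_mul' g g' := smul_left_injective K hv <| by
    change c (g * g') • v = (c g * c g') • v
    rw [← hc, map_mul, Module.End.mul_apply, hc g', map_smul, hc g, smul_smul, mul_comm]

theorem isCyclic_of_finrank_eigenspace_le_one [IsAlgClosed K] [FiniteDimensional K V]
    [Group G] [IsMulCommutative G] [Finite G] (ρ : Representation K G V) (hG : (Nat.card G : K) ≠ 0)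
    (hV : 2 ≤ finrank K V) (h : ∀ g ≠ 1, ∀ μ, finrank K (eigenspace (ρ g) μ) ≤ 1) :
    IsCyclic G := by
  rcases subsingleton_or_nontrivial G with _ | _
  · infer_instance
  obtain ⟨g₀, hg₀⟩ := exists_ne (1 : G)
  have hss : IsSemisimple (ρ g₀) :=
    isSemisimple_of_pow_eq_one hG (by rw [← map_pow, pow_card_eq_one', map_one])
  have hnot_top (μ : K) : eigenspace (ρ g₀) μ ≠ ⊤ := fun htop => by
    have := h g₀ hg₀ μ
    rw [htop, finrank_top] at this
    omega
  obtain ⟨μ₁, μ₂, hμ, hμ₁, hμ₂⟩ := exists_hasEigenvalue_ne_of_isSemisimple hss hnot_top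
  obtain ⟨v₁, hv₁⟩ := hμ₁.exists_hasEigenvector
  obtain ⟨v₂, hv₂⟩ := hμ₂.exists_hasEigenvector
  have hcomm (g : G) : Commute (ρ g₀) (ρ g) := by
    rw [Commute, SemiconjBy, ← map_mul, ← map_mul, mul_comm' g₀ g]
  choose c₁ hc₁ using fun g =>
    exists_smul_of_commute_of_finrank_eigenspace_le_one (hcomm g) (h g₀ hg₀ μ₁) hv₁
  choose c₂ hc₂ using fun g =>
    exists_smul_of_commute_of_finrank_eigenspace_le_one (hcomm g) (h g₀ hg₀ μ₂) hv₂
  have hind : LinearIndependent K ![v₁, v₂] :=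
    eigenvectors_linearIndependent' (ρ g₀) ![μ₁, μ₂]
      (by simp [Function.Injective, Fin.forall_fin_two, hμ, hμ.symm]) _
      (Fin.forall_fin_two.mpr ⟨hv₁, hv₂⟩)
  have hker (g : G) (hg : c₁ g = c₂ g) : g = 1 := by
    by_contra hg1
    have hle : Submodule.span K (Set.range ![v₁, v₂]) ≤ eigenspace (ρ g) (c₁ g) := by
      rw [Submodule.span_le, Set.range_subset_iff, Fin.forall_fin_two]
      exact ⟨mem_eigenspace_iff.mpr (hc₁ g),
        mem_eigenspace_iff.mpr (by rw [hg]; exact hc₂ g)⟩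
    have := Submodule.finrank_mono hle
    rw [finrank_span_eq_card hind, Fintype.card_fin] at this
    have := h g hg1 (c₁ g)
    omega
  let χ₁ := charOfEigenvector ρ hv₁.2 hc₁
  let χ₂ := charOfEigenvector ρ hv₂.2 hc₂
  refine isCyclic_of_injective_ringHom
    ((Units.coeHom K).comp (χ₁.toHomUnits / χ₂.toHomUnits)) ?_
  refine (injective_iff_map_eq_one _).mpr fun g hg => hker g ?_
  rw [MonoidHom.comp_apply, Units.coeHom_apply, Units.val_eq_one, MonoidHom.div_apply,
    div_eq_one, Units.ext_iff] at hg
  exact hg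

end Representation

/-- Let `k` be an algebraically closed field of characteristic zero, let `p` be a prime
number, and let `Ǧ` be a subgroup of `GL₃(k)` isomorphic to `μ_p × μ_p` which contains no
non-trivial scalar matrix. Then there exists an element `g ∈ Ǧ` which is not a scalar matrix
and which has an eigenvalue `λ ∈ k` whose eigenspace has dimension `2`. (Geometrically: the
image of `g` in `PGL₃(k)` acts on `ℙ²` with fixed locus a line together with a unique
isolated point.) -/
theorem stmt_13 (k : Type) [Field k] [IsAlgClosed k] [CharZero k]
    (p : ℕ) (hp : p.Prime) (G : Subgroup (GL (Fin 3) k))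
    (hiso : Nonempty (G ≃* Multiplicative (ZMod p × ZMod p)))
    (hscal : ∀ g ∈ G, (∃ c : k, ((g : GL (Fin 3) k) : Matrix (Fin 3) (Fin 3) k) =
      c • (1 : Matrix (Fin 3) (Fin 3) k)) → g = 1) :
    ∃ g ∈ G,
      (¬ ∃ c : k, ((g : GL (Fin 3) k) : Matrix (Fin 3) (Fin 3) k) =
        c • (1 : Matrix (Fin 3) (Fin 3) k)) ∧
      ∃ lam : k, Module.finrank k
        (Module.End.eigenspace
          (Matrix.mulVecLin ((g : GL (Fin 3) k) : Matrix (Fin 3) (Fin 3) k)) lam) = 2 := by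
  obtain ⟨f⟩ := hiso
  have : NeZero p := ⟨hp.ne_zero⟩
  have : Finite G := .of_equiv _ f.symm.toEquiv
  have : IsMulCommutative G :=
    .of_comm fun a b => f.injective (by rw [map_mul, map_mul, mul_comm])
  let ρ : Representation k G (Fin 3 → k) :=
    Matrix.toLinAlgEquiv'.toMonoidHom.comp ((Units.coeHom _).comp G.subtype)
  by_contra hcon
  have hsmall (g : G) (hg : g ≠ 1) (μ : k) : finrank k (eigenspace (ρ g) μ) ≤ 1 := by
    have hns : ¬∃ c : k, ((g : GL (Fin 3) k) : Matrix (Fin 3) (Fin 3) k) = c • 1 :=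
      fun hc => hg (Subtype.ext (hscal g g.2 hc))
    have h2 : finrank k (eigenspace (ρ g) μ) ≠ 2 := fun h2 => hcon ⟨g, g.2, hns, μ, h2⟩
    have h3 : finrank k (eigenspace (ρ g) μ) ≠ 3 := fun h3 =>
      hns ⟨μ, Matrix.eq_smul_one_of_eigenspace_mulVecLin_eq_top
        (Submodule.eq_top_of_finrank_eq (by rw [finrank_fin_fun]; exact h3))⟩
    have := (eigenspace (ρ g) μ).finrank_le
    rw [finrank_fin_fun] at this
    omega
  have hcyc := ρ.isCyclic_of_finrank_eigenspace_le_one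
    (Nat.cast_ne_zero.mpr Nat.card_pos.ne') (by simp) hsmall
  rw [f.isCyclic, isCyclic_multiplicative_iff, AddGroup.isAddCyclic_prod_iff, Nat.card_zmod,
    Nat.coprime_self] at hcyc
  exact hp.one_lt.ne' hcyc.2.2
end

section
/- Let k be an algebraically closed field of characteristic zero, let n be a positive integer divisible only by primes congruent to 1 modulo 3, let χ : μ_3 → (ℤ/nℤ)ˣ be a group homomorphism, and let G = μ_n ⋊_χ μ_3 be the corresponding semidirect product. If there exists an injective group homomorphism from G into PGL₃(k), then either G is isomorphic to the direct product μ_n × μ_3 (equivalently χ is trivial), or χ is balanced. -/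
/-- `PGL₃(k)`: the quotient of `GL₃(k)` by its center (the scalar matrices). -/
abbrev PGL3 (k : Type) [Field k] : Type :=
  GL (Fin 3) k ⧸ Subgroup.center (GL (Fin 3) k)

section Aux
open Matrix Polynomial Module
variable {k : Type} [Field k]

lemma scalar_mem_center (U : GL (Fin 3) k) (c : k)
    (hU : (U : Matrix (Fin 3) (Fin 3) k) = c • 1) :
    U ∈ Subgroup.center (GL (Fin 3) k) := by
  rw [Subgroup.mem_center_iff]
  intro g
  apply Units.ext
  show (g : Matrix (Fin 3) (Fin 3) k) * U = (U : Matrix (Fin 3) (Fin 3) k) * g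
  rw [hU, Matrix.mul_smul, Matrix.smul_mul, mul_one, one_mul]

lemma center_is_scalar {Z : GL (Fin 3) k} (hZ : Z ∈ Subgroup.center (GL (Fin 3) k)) :
    ∃ c : k, c ≠ 0 ∧ (Z : Matrix (Fin 3) (Fin 3) k) = c • 1 := by
  rw [Subgroup.mem_center_iff] at hZ
  have h : ∀ t : TransvectionStruct (Fin 3) k, Commute t.toMatrix (Z : Matrix (Fin 3) (Fin 3) k) := by
    intro t
    have := hZ ⟨t.toMatrix, t.inv.toMatrix, t.mul_inv, t.inv_mul⟩
    exact congrArg Units.val this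
  obtain ⟨c, hc⟩ := Matrix.mem_range_scalar_of_commute_transvectionStruct h
  refine ⟨c, ?_, ?_⟩
  · intro h0
    have h1 : (Z : Matrix (Fin 3) (Fin 3) k) * ((Z⁻¹ : GL (Fin 3) k) : Matrix (Fin 3) (Fin 3) k) = 1 := by
      rw [← Units.val_mul, mul_inv_cancel, Units.val_one]
    rw [← hc, h0] at h1
    simp only [Matrix.scalar_apply, Matrix.diagonal_zero, Matrix.zero_mul] at h1
    have := congrFun (congrFun h1 0) 0
    simp at this
  · rw [← hc]
    ext i j
    by_cases hij : i = j <;>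
      simp [Matrix.scalar_apply, Matrix.diagonal_apply, Matrix.one_apply, Matrix.smul_apply, hij]

lemma mulVec_pow_eigen {M : Matrix (Fin 3) (Fin 3) k} {μ : k} {v : Fin 3 → k}
    (hv : M.mulVec v = μ • v) (m : ℕ) : (M ^ m).mulVec v = μ ^ m • v := by
  induction m with
  | zero => simp
  | succ m ih =>
      rw [pow_succ', ← Matrix.mulVec_mulVec, ih, Matrix.mulVec_smul, hv, smul_smul, ← pow_succ]

lemma pow_eq_of_mod_eq {μ : k} {N : ℕ} (hμ : μ ^ N = 1) {i j : ℕ} (h : i % N = j % N) :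
    μ ^ i = μ ^ j := by
  conv_lhs => rw [← Nat.div_add_mod i N]
  conv_rhs => rw [← Nat.div_add_mod j N]
  rw [pow_add, pow_add, pow_mul, pow_mul, hμ, h]
  simp

lemma smul_cancel_vec {a b : k} {v : Fin 3 → k} (hv : v ≠ 0) (h : a • v = b • v) : a = b := by
  have h2 : (a - b) • v = 0 := by rw [sub_smul, h, sub_self]
  rcases smul_eq_zero.mp h2 with h3 | h3
  · exact sub_eq_zero.mp h3
  · exact absurd h3 hv

lemma pow_eq_smul_one_of_eigen {n : ℕ} (hn : n ≠ 0) [IsAlgClosed k] [CharZero k]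
    {M : Matrix (Fin 3) (Fin 3) k} (hM : M ^ n = 1) (m : ℕ) (lam : k)
    (h : ∀ μ : k, ∀ v : Fin 3 → k, v ≠ 0 → M.mulVec v = μ • v → μ ^ m = lam) :
    M ^ m = lam • 1 := by
  set φ : Module.End k (Fin 3 → k) := Matrix.toLinAlgEquiv' M with hφ
  have hφn : aeval φ (X ^ n - 1 : k[X]) = 0 := by
    rw [map_sub, map_pow, aeval_X, Polynomial.aeval_one, hφ, ← map_pow, hM, _root_.map_one, sub_self]
  have hsq : Squarefree (X ^ n - 1 : k[X]) := by
    have := (Polynomial.separable_X_pow_sub_C (F := k) 1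
      (by exact_mod_cast Nat.cast_ne_zero.mpr hn) one_ne_zero).squarefree
    simpa using this
  have hss := (Module.End.isSemisimple_of_squarefree_aeval_eq_zero hsq hφn).isFinitelySemisimple
  have htop : ⨆ μ : k, φ.eigenspace μ = ⊤ := by
    have h1 := Module.End.iSup_maxGenEigenspace_eq_top φ
    simp only [hss.maxGenEigenspace_eq_eigenspace] at h1
    exact h1
  have key : ∀ μ : k, φ.eigenspace μ ≤ LinearMap.ker (Matrix.toLinAlgEquiv' (M ^ m - lam • 1)) := by
    intro μ v hv
    rw [Module.End.mem_eigenspace_iff] at hv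
    rcases eq_or_ne v 0 with rfl | hv0
    · simp
    have hv' : M.mulVec v = μ • v := by
      rw [hφ] at hv; rwa [Matrix.toLinAlgEquiv'_apply] at hv
    have hμ : μ ^ m = lam := h μ v hv0 hv'
    rw [LinearMap.mem_ker, Matrix.toLinAlgEquiv'_apply, Matrix.sub_mulVec,
      mulVec_pow_eigen hv', hμ, Matrix.smul_mulVec, Matrix.one_mulVec, sub_self]
  have hker : LinearMap.ker (Matrix.toLinAlgEquiv' (M ^ m - lam • 1)) = ⊤ :=
    top_unique (htop ▸ iSup_le key)
  have hz : Matrix.toLinAlgEquiv' (M ^ m - lam • 1) = (0 : Module.End k (Fin 3 → k)) :=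
    LinearMap.ker_eq_top.mp hker
  have : M ^ m - lam • 1 = 0 := by
    apply (Matrix.toLinAlgEquiv' (R := k) (n := Fin 3)).injective
    rw [hz, map_zero]
  rw [sub_eq_zero] at this
  exact this

lemma no_four_eigen {M : Matrix (Fin 3) (Fin 3) k} {x y z w : k}
    (hxy : x ≠ y) (hxz : x ≠ z) (hxw : x ≠ w) (hyz : y ≠ z) (hyw : y ≠ w) (hzw : z ≠ w)
    (hex : ∃ v, v ≠ 0 ∧ M.mulVec v = x • v)
    (hey : ∃ v, v ≠ 0 ∧ M.mulVec v = y • v)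
    (hez : ∃ v, v ≠ 0 ∧ M.mulVec v = z • v)
    (hew : ∃ v, v ≠ 0 ∧ M.mulVec v = w • v) : False := by
  obtain ⟨vx, hvx0, hvx⟩ := hex
  obtain ⟨vy, hvy0, hvy⟩ := hey
  obtain ⟨vz, hvz0, hvz⟩ := hez
  obtain ⟨vw, hvw0, hvw⟩ := hew
  have hinj : Function.Injective (![x, y, z, w]) := by
    intro i j hij
    fin_cases i <;> fin_cases j <;> simp_all
  set φ : Module.End k (Fin 3 → k) := Matrix.toLinAlgEquiv' M with hφ
  have heig : ∀ i, φ.HasEigenvector ((![x, y, z, w]) i)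
      ((![vx, vy, vz, vw]) i) := by
    intro i
    fin_cases i <;>
      exact ⟨Module.End.mem_eigenspace_iff.mpr
        (by rw [hφ, Matrix.toLinAlgEquiv'_apply]; assumption), by assumption⟩
  have hli := Module.End.eigenvectors_linearIndependent' φ
    (![x, y, z, w]) hinj (![vx, vy, vz, vw]) heig
  have hcard := hli.fintype_card_le_finrank
  rw [Module.finrank_fin_fun, Fintype.card_fin] at hcard
  omega

end Aux

lemma key_lemma {k : Type} [Field k] [IsAlgClosed k] [CharZero k]
    {n : ℕ} [NeZero n] [Fact (1 < n)]
    (χ : Multiplicative (ZMod 3) →* (ZMod n)ˣ)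
    (f : (Multiplicative (ZMod n) ⋊[(zmodAction n).comp χ] Multiplicative (ZMod 3)) →* PGL3 k)
    (hf : Function.Injective f)
    (haone : χ (Multiplicative.ofAdd (1 : ZMod 3)) ≠ 1) :
    (1 : ZMod n) + ((χ (Multiplicative.ofAdd (1 : ZMod 3)) : (ZMod n)ˣ) : ZMod n)
      + ((χ (Multiplicative.ofAdd (1 : ZMod 3)) : (ZMod n)ˣ) : ZMod n) ^ 2 = 0 := by
  classical
  have hn : 0 < n := Nat.pos_of_ne_zero (NeZero.ne n)
  set a : (ZMod n)ˣ := χ (Multiplicative.ofAdd (1 : ZMod 3)) with ha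
  set e : ℕ := ((a : ZMod n)).val with he
  have hea : ((e : ℕ) : ZMod n) = (a : ZMod n) := by
    rw [he, ZMod.natCast_val, ZMod.cast_id]
  have ha0 : (a : ZMod n) ≠ 0 := by
    intro h0
    have h1 := a.mul_inv
    rw [h0, zero_mul] at h1
    exact zero_ne_one h1
  have he1 : 1 ≤ e := by
    rcases Nat.eq_zero_or_pos e with h0 | h
    · exact absurd (by rw [← hea, h0, Nat.cast_zero]) ha0
    · exact h
  -- semidirect product relations
  set gN : Multiplicative (ZMod n) := Multiplicative.ofAdd 1 with hgN
  set g3 : Multiplicative (ZMod 3) := Multiplicative.ofAdd 1 with hg3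
  have hpow_gN : ∀ m : ℕ, gN ^ m = Multiplicative.ofAdd ((m : ZMod n)) := by
    intro m
    rw [hgN, ← ofAdd_nsmul, nsmul_eq_mul, mul_one]
  have hφval : ((zmodAction n).comp χ) g3 gN = gN ^ e := by
    rw [hpow_gN]
    show Multiplicative.ofAdd (a • (1 : ZMod n)) = Multiplicative.ofAdd ((e : ZMod n))
    rw [Units.smul_def, smul_eq_mul, mul_one, hea]
  have hconjG : SemidirectProduct.inr g3 * SemidirectProduct.inl gN
      = ((SemidirectProduct.inl gN : Multiplicative (ZMod n) ⋊[(zmodAction n).comp χ]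
          Multiplicative (ZMod 3)) ^ e) * SemidirectProduct.inr g3 := by
    have h1 := SemidirectProduct.inl_aut (φ := (zmodAction n).comp χ) g3 gN
    rw [hφval] at h1
    have h2 : (SemidirectProduct.inl (gN ^ e) : Multiplicative (ZMod n) ⋊[(zmodAction n).comp χ]
          Multiplicative (ZMod 3)) * SemidirectProduct.inr g3
        = SemidirectProduct.inr g3 * SemidirectProduct.inl gN := by
      rw [h1, mul_assoc, mul_assoc, ← map_mul, inv_mul_cancel, map_one, mul_one]
    rw [map_pow] at h2
    exact h2.symm
  set t : PGL3 k := f (SemidirectProduct.inl gN) with ht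
  set σ : PGL3 k := f (SemidirectProduct.inr g3) with hσ
  have hconj : σ * t = t ^ e * σ := by
    have h1 := congrArg f hconjG
    rw [map_mul, map_mul, map_pow] at h1
    exact h1
  have hgNn : gN ^ n = 1 := by
    rw [hpow_gN, ZMod.natCast_self]
    rfl
  have htn : t ^ n = 1 := by
    have h1 : (SemidirectProduct.inl (gN ^ n) :
        Multiplicative (ZMod n) ⋊[(zmodAction n).comp χ] Multiplicative (ZMod 3)) = 1 := by
      rw [hgNn, map_one]
    calc t ^ n = f (SemidirectProduct.inl (gN ^ n)) := by rw [map_pow, map_pow]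
      _ = 1 := by rw [h1, map_one]
  have hg33 : g3 ^ 3 = 1 := by
    rw [hg3]; decide
  have hσ3 : σ ^ 3 = 1 := by
    have h1 : (SemidirectProduct.inr (g3 ^ 3) :
        Multiplicative (ZMod n) ⋊[(zmodAction n).comp χ] Multiplicative (ZMod 3)) = 1 := by
      rw [hg33, map_one]
    calc σ ^ 3 = f (SemidirectProduct.inr (g3 ^ 3)) := by rw [map_pow, map_pow]
      _ = 1 := by rw [h1, map_one]
  have hinjm : ∀ m : ℕ, t ^ m = 1 → ((m : ℕ) : ZMod n) = 0 := by
    intro m hm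
    have h1 : f (SemidirectProduct.inl (gN ^ m)) = f 1 := by
      rw [map_pow, map_pow, map_one]
      exact hm
    have h3 : gN ^ m = 1 := SemidirectProduct.inl_injective (hf h1)
    rw [hpow_gN] at h3
    exact ofAdd_eq_one.mp h3
  -- lift to GL
  obtain ⟨T₀, hT₀⟩ := QuotientGroup.mk'_surjective (Subgroup.center (GL (Fin 3) k)) t
  obtain ⟨S, hS⟩ := QuotientGroup.mk'_surjective (Subgroup.center (GL (Fin 3) k)) σ
  have hT0n : T₀ ^ n ∈ Subgroup.center (GL (Fin 3) k) := by
    rw [← QuotientGroup.ker_mk' (Subgroup.center (GL (Fin 3) k)), MonoidHom.mem_ker, map_pow, hT₀]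
    exact htn
  obtain ⟨z, hz0, hz⟩ := center_is_scalar hT0n
  obtain ⟨ω, hω⟩ := IsAlgClosed.exists_pow_nat_eq (z⁻¹ : k) hn
  have hω0 : ω ≠ 0 := by
    intro h0
    rw [h0, zero_pow hn.ne'] at hω
    exact inv_ne_zero hz0 hω.symm
  set U : GL (Fin 3) k := ⟨ω • 1, ω⁻¹ • 1,
    by rw [Matrix.smul_mul, one_mul, smul_smul, mul_inv_cancel₀ hω0, one_smul],
    by rw [Matrix.smul_mul, one_mul, smul_smul, inv_mul_cancel₀ hω0, one_smul]⟩ with hU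
  have hUc : U ∈ Subgroup.center (GL (Fin 3) k) := scalar_mem_center U ω rfl
  set T : GL (Fin 3) k := U * T₀ with hT
  have hTt : QuotientGroup.mk' (Subgroup.center (GL (Fin 3) k)) T = t := by
    rw [hT, map_mul, hT₀]
    have : QuotientGroup.mk' (Subgroup.center (GL (Fin 3) k)) U = 1 := by
      rw [← MonoidHom.mem_ker, QuotientGroup.ker_mk']
      exact hUc
    rw [this, one_mul]
  have hTn : T ^ n = 1 := by
    have hcomm : Commute U T₀ := (Subgroup.mem_center_iff.mp hUc T₀).symm
    apply Units.ext
    rw [hT, hcomm.mul_pow, Units.val_mul, hz, Units.val_pow_eq_pow_val]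
    show (ω • (1 : Matrix (Fin 3) (Fin 3) k)) ^ n * (z • 1) = ((1 : GL (Fin 3) k) : Matrix (Fin 3) (Fin 3) k)
    rw [smul_pow, one_pow, hω, Matrix.smul_mul, one_mul, smul_smul, inv_mul_cancel₀ hz0, one_smul, Units.val_one]
  -- the central element Z
  have hZc : S * T * S⁻¹ * (T ^ e)⁻¹ ∈ Subgroup.center (GL (Fin 3) k) := by
    rw [← QuotientGroup.ker_mk' (Subgroup.center (GL (Fin 3) k)), MonoidHom.mem_ker,
      map_mul, map_mul, map_mul, map_inv, map_inv, map_pow, hS, hTt, hconj]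
    group
  set Z : GL (Fin 3) k := S * T * S⁻¹ * (T ^ e)⁻¹ with hZdef
  have hZrel : S * T * S⁻¹ = Z * T ^ e := by
    rw [hZdef]; group
  obtain ⟨c, hc0, hc⟩ := center_is_scalar hZc
  have hS3c : S ^ 3 ∈ Subgroup.center (GL (Fin 3) k) := by
    rw [← QuotientGroup.ker_mk' (Subgroup.center (GL (Fin 3) k)), MonoidHom.mem_ker, map_pow, hS]
    exact hσ3
  have hZcomm : ∀ W : GL (Fin 3) k, Commute Z W :=
    fun W => (Subgroup.mem_center_iff.mp hZc W).symm
  have hconj2 : ∀ j : ℕ, S * T ^ j * S⁻¹ = Z ^ j * T ^ (e * j) := by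
    intro j
    have h1 : S * T ^ j * S⁻¹ = (S * T * S⁻¹) ^ j := by
      induction j with
      | zero => simp
      | succ i ih => rw [pow_succ, pow_succ, ← ih]; group
    rw [h1, hZrel, (hZcomm (T ^ e)).mul_pow, ← pow_mul]
  have hstep : ∀ i j : ℕ, S * (Z ^ i * T ^ j) * S⁻¹ = Z ^ i * (Z ^ j * T ^ (e * j)) := by
    intro i j
    have h1 : S * (Z ^ i * T ^ j) * S⁻¹ = (S * Z ^ i * S⁻¹) * (S * T ^ j * S⁻¹) := by group
    have h2 : S * Z ^ i * S⁻¹ = Z ^ i := by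
      rw [← ((hZcomm S).pow_left i).eq, mul_inv_cancel_right]
    rw [h1, h2, hconj2 j]
  have hk3 : T = Z ^ (1 + (e + e * e)) * T ^ (e * (e * e)) := by
    have h4 : S * (S * (S * T * S⁻¹) * S⁻¹) * S⁻¹ = T := by
      have hcS3 : T * S ^ 3 = S ^ 3 * T := Subgroup.mem_center_iff.mp hS3c T
      have h30 : S ^ 3 = S * S * S := by norm_num [pow_succ]
      have h5 : S * (S * (S * T * S⁻¹) * S⁻¹) * S⁻¹ = S ^ 3 * T * (S ^ 3)⁻¹ := by
        rw [h30]
        group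
      rw [h5, ← hcS3, mul_inv_cancel_right]
    have h6 : S * T * S⁻¹ = Z ^ 1 * T ^ (e * 1) := by
      rw [hZrel, pow_one, mul_one]
    calc T = S * (S * (S * T * S⁻¹) * S⁻¹) * S⁻¹ := h4.symm
      _ = S * (S * (Z ^ 1 * T ^ (e * 1)) * S⁻¹) * S⁻¹ := by rw [h6]
      _ = S * (Z ^ 1 * (Z ^ (e * 1) * T ^ (e * (e * 1)))) * S⁻¹ := by rw [hstep 1 (e * 1)]
      _ = S * (Z ^ (1 + e * 1) * T ^ (e * (e * 1))) * S⁻¹ := by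
            rw [show (Z : GL (Fin 3) k) ^ 1 * (Z ^ (e * 1) * T ^ (e * (e * 1)))
              = Z ^ (1 + e * 1) * T ^ (e * (e * 1)) from by rw [← mul_assoc, ← pow_add]]
      _ = Z ^ (1 + e * 1) * (Z ^ (e * (e * 1)) * T ^ (e * (e * (e * 1)))) := by
            rw [hstep (1 + e * 1) (e * (e * 1))]
      _ = Z ^ (1 + (e + e * e)) * T ^ (e * (e * e)) := by
            rw [← mul_assoc, ← pow_add]
            simp only [mul_one, add_assoc]
  -- matrix level
  set M : Matrix (Fin 3) (Fin 3) k := (T : Matrix (Fin 3) (Fin 3) k) with hM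
  have hMn : M ^ n = 1 := by
    rw [hM, ← Units.val_pow_eq_pow_val, hTn, Units.val_one]
  -- eigenvalue predicate
  set Eig : k → Prop := fun μ => ∃ v, v ≠ 0 ∧ M.mulVec v = μ • v with hEig
  have hroot : ∀ μ, Eig μ → μ ^ n = 1 := by
    rintro μ ⟨v, hv0, hv⟩
    have h1 := mulVec_pow_eigen hv n
    rw [hMn, Matrix.one_mulVec] at h1
    exact (smul_cancel_vec hv0 (by rw [← h1, one_smul])).symm
  have hne0 : ∀ μ, Eig μ → μ ≠ 0 := by
    intro μ hμ h0
    have := hroot μ hμ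
    rw [h0, zero_pow hn.ne'] at this
    exact zero_ne_one this
  -- the scalar criterion
  have hscalar : ∀ (m : ℕ) (lam : k), (∀ μ, Eig μ → μ ^ m = lam) → ((m : ℕ) : ZMod n) = 0 := by
    intro m lam hall
    have hMm : M ^ m = lam • 1 :=
      pow_eq_smul_one_of_eigen hn.ne' hMn m lam (fun μ v hv0 hv => hall μ ⟨v, hv0, hv⟩)
    have hcent : T ^ m ∈ Subgroup.center (GL (Fin 3) k) :=
      scalar_mem_center _ lam (by rw [Units.val_pow_eq_pow_val, ← hM]; exact hMm)
    have htm : t ^ m = 1 := by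
      rw [← hTt, ← map_pow, ← MonoidHom.mem_ker, QuotientGroup.ker_mk']
      exact hcent
    exact hinjm m htm
  -- the eigenvalue map
  have hSS' : (S : Matrix (Fin 3) (Fin 3) k) * ((S⁻¹ : GL (Fin 3) k) : Matrix (Fin 3) (Fin 3) k) = 1 := by
    rw [← Units.val_mul, mul_inv_cancel, Units.val_one]
  have hMrel : M = ((S⁻¹ : GL (Fin 3) k) : Matrix (Fin 3) (Fin 3) k) * (c • M ^ e)
      * (S : Matrix (Fin 3) (Fin 3) k) := by
    have h1 : T = S⁻¹ * (Z * T ^ e) * S := by rw [← hZrel]; group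
    have h2 := congrArg Units.val h1
    simp only [Units.val_mul, Units.val_pow_eq_pow_val] at h2
    rw [hc, Matrix.smul_mul, one_mul] at h2
    exact h2
  have hg : ∀ μ, Eig μ → Eig (c * μ ^ e) := by
    rintro μ ⟨v, hv0, hv⟩
    refine ⟨((S⁻¹ : GL (Fin 3) k) : Matrix (Fin 3) (Fin 3) k).mulVec v, ?_, ?_⟩
    · intro h0
      apply hv0
      have h1 : ((S : Matrix (Fin 3) (Fin 3) k) * ((S⁻¹ : GL (Fin 3) k) : Matrix (Fin 3) (Fin 3) k)).mulVec v = v := by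
        rw [hSS', Matrix.one_mulVec]
      rw [← h1, ← Matrix.mulVec_mulVec, h0, Matrix.mulVec_zero]
    · rw [Matrix.mulVec_mulVec]
      conv_lhs => rw [hMrel]
      have h2 : ((S⁻¹ : GL (Fin 3) k) : Matrix (Fin 3) (Fin 3) k) * (c • M ^ e)
          * (S : Matrix (Fin 3) (Fin 3) k) * ((S⁻¹ : GL (Fin 3) k) : Matrix (Fin 3) (Fin 3) k)
          = ((S⁻¹ : GL (Fin 3) k) : Matrix (Fin 3) (Fin 3) k) * (c • M ^ e) := by
        rw [mul_assoc, hSS', mul_one]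
      rw [h2, ← Matrix.mulVec_mulVec, Matrix.smul_mulVec, mulVec_pow_eigen hv,
        smul_smul, Matrix.mulVec_smul]
  have hM3 : M = (c ^ (1 + (e + e * e))) • M ^ (e * (e * e)) := by
    have h2 := congrArg Units.val hk3
    simp only [Units.val_mul, Units.val_pow_eq_pow_val] at h2
    rw [hc, smul_pow, one_pow, Matrix.smul_mul, one_mul] at h2
    exact h2
  have hg3full : ∀ μ, Eig μ → c * (c * (c * μ ^ e) ^ e) ^ e = μ := by
    rintro μ ⟨v, hv0, hv⟩
    have h1 := mulVec_pow_eigen hv (e * (e * e))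
    have h2 : μ • v = (c ^ (1 + (e + e * e)) * μ ^ (e * (e * e))) • v := by
      rw [← hv]
      conv_lhs => rw [hM3]
      rw [Matrix.smul_mulVec, h1, smul_smul]
    have h3 : μ = c ^ (1 + (e + e * e)) * μ ^ (e * (e * e)) := smul_cancel_vec hv0 h2
    conv_rhs => rw [h3]
    ring
  have hginj : ∀ μ ν : k, μ ^ n = 1 → ν ^ n = 1 → c * μ ^ e = c * ν ^ e → μ = ν := by
    intro μ ν hμ hν h
    have h1 : μ ^ e = ν ^ e := mul_left_cancel₀ hc0 h
    set e' : ℕ := ((a⁻¹ : (ZMod n)ˣ) : ZMod n).val with he'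
    have hee' : ((e * e' : ℕ) : ZMod n) = ((1 : ℕ) : ZMod n) := by
      push_cast
      rw [hea, he', ZMod.natCast_val, ZMod.cast_id]
      rw [← Units.val_mul, mul_inv_cancel, Units.val_one]
    have hmod : (e * e') % n = 1 % n := (ZMod.natCast_eq_natCast_iff _ _ _).mp hee'
    calc μ = μ ^ 1 := (pow_one μ).symm
      _ = μ ^ (e * e') := (pow_eq_of_mod_eq hμ hmod).symm
      _ = (μ ^ e) ^ e' := by rw [pow_mul]
      _ = (ν ^ e) ^ e' := by rw [h1]
      _ = ν ^ (e * e') := by rw [← pow_mul]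
      _ = ν ^ 1 := pow_eq_of_mod_eq hν hmod
      _ = ν := pow_one ν
  -- existence of an eigenvalue
  obtain ⟨x, vx, hvx0, hvx⟩ : ∃ μ v, v ≠ 0 ∧ M.mulVec v = μ • v := by
    obtain ⟨μ, hμ⟩ := Module.End.exists_eigenvalue
      (Matrix.toLinAlgEquiv' M : Module.End k (Fin 3 → k))
    obtain ⟨v, hv⟩ := hμ.exists_hasEigenvector
    refine ⟨μ, v, hv.right, ?_⟩
    have := Module.End.mem_eigenspace_iff.mp hv.left
    rwa [Matrix.toLinAlgEquiv'_apply] at this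
  have hxE : Eig x := ⟨vx, hvx0, hvx⟩
  -- main case split
  by_cases hfix : ∀ μ, Eig μ → c * μ ^ e = μ
  · exfalso
    have hall : ∀ μ, Eig μ → μ ^ (e - 1) = c⁻¹ := by
      intro μ hμ
      have h1 := hfix μ hμ
      have hμ0 := hne0 μ hμ
      have h2 : μ ^ e = μ ^ (e - 1) * μ := by
        rw [← pow_succ, Nat.sub_add_cancel he1]
      rw [h2, ← mul_assoc] at h1
      have h3 : c * μ ^ (e - 1) = 1 := by
        have h4 : c * μ ^ (e - 1) * μ = 1 * μ := by rw [h1, one_mul]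
        exact mul_right_cancel₀ hμ0 h4
      exact (inv_eq_of_mul_eq_one_right h3).symm
    have h0 := hscalar (e - 1) c⁻¹ hall
    rw [Nat.cast_sub he1, Nat.cast_one, sub_eq_zero, hea] at h0
    exact haone (Units.val_eq_one.mp h0)
  · push_neg at hfix
    obtain ⟨x', hxE', hxne⟩ := hfix
    clear hxE hvx hvx0
    set y : k := c * x' ^ e with hy
    set z : k := c * y ^ e with hz'
    have hyE : Eig y := hg x' hxE'
    have hzE : Eig z := hg y hyE
    have hback : c * z ^ e = x' := by
      have := hg3full x' hxE'
      rw [← hy, ← hz'] at this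
      exact this
    have hxn := hroot x' hxE'
    have hyn := hroot y hyE
    have hzn := hroot z hzE
    have hx0 := hne0 x' hxE'
    have hy0 := hne0 y hyE
    have hz0 := hne0 z hzE
    have hxy : x' ≠ y := fun h => hxne h.symm
    have hyz : y ≠ z := by
      intro h
      exact hxy (hginj x' y hxn hyn (by rw [← hy, ← hz']; exact h))
    have hxz : x' ≠ z := by
      intro h
      exact hxy ((hy.trans (by rw [h])).trans hback).symm
    have hcov : ∀ μ, Eig μ → μ = x' ∨ μ = y ∨ μ = z := by
      intro μ hμ
      by_contra hcon
      push_neg at hcon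
      exact no_four_eigen hxy hxz (Ne.symm hcon.1) hyz (Ne.symm hcon.2.1) (Ne.symm hcon.2.2)
        hxE' hyE hzE hμ
    -- the symmetric products
    set m : ℕ := 1 + (e + e * e) with hm
    have hxyz1 : x' * y * z = x' ^ m * c ^ (2 + e) := by
      rw [hz', hy, hm]
      ring
    have hxyz2 : x' * y * z = y ^ m * c ^ (2 + e) := by
      rw [← hback, hz', hm]
      ring
    have hxyz3 : x' * y * z = z ^ m * c ^ (2 + e) := by
      rw [hy, ← hback, hz', hm]
      ring
    have hcp0 : c ^ (2 + e) ≠ 0 := pow_ne_zero _ hc0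
    have hym : y ^ m = x' ^ m := mul_right_cancel₀ hcp0 (hxyz2 ▸ hxyz1)
    have hzm : z ^ m = x' ^ m := mul_right_cancel₀ hcp0 (hxyz3 ▸ hxyz1)
    have hall : ∀ μ, Eig μ → μ ^ m = x' ^ m := by
      intro μ hμ
      rcases hcov μ hμ with h | h | h
      · rw [h]
      · rw [h]; exact hym
      · rw [h]; exact hzm
    have h0 := hscalar m (x' ^ m) hall
    rw [hm] at h0
    push_cast at h0
    rw [hea] at h0
    calc (1 : ZMod n) + (a : ZMod n) + (a : ZMod n) ^ 2
        = 1 + ((a : ZMod n) + (a : ZMod n) * (a : ZMod n)) := by ring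
      _ = 0 := h0

/-- Let `k` be an algebraically closed field of characteristic zero, let `n` be a positive
integer divisible only by primes congruent to `1` modulo `3`, let `χ : μ₃ → (ℤ/nℤ)ˣ` be a
group homomorphism, and let `G = μ_n ⋊_χ μ₃`. If there exists an injective group homomorphism
from `G` into `PGL₃(k)`, then either `G` is isomorphic to the direct product `μ_n × μ₃`, or
`χ` is balanced. -/
theorem stmt_17 (k : Type) [Field k] [IsAlgClosed k] [CharZero k]
    (n : ℕ) (hn : 0 < n) (hdiv : ∀ p : ℕ, p.Prime → p ∣ n → p % 3 = 1)
    (χ : Multiplicative (ZMod 3) →* (ZMod n)ˣ)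
    (f : (Multiplicative (ZMod n) ⋊[(zmodAction n).comp χ] Multiplicative (ZMod 3)) →* PGL3 k)
    (hf : Function.Injective f) :
    Nonempty
      ((Multiplicative (ZMod n) ⋊[(zmodAction n).comp χ] Multiplicative (ZMod 3)) ≃*
        Multiplicative (ZMod n) × Multiplicative (ZMod 3)) ∨
    IsBalanced n χ := by
  classical
  by_cases hn1 : n = 1
  · right
    intro p hp hpn
    exfalso
    rw [hn1] at hpn
    exact Nat.not_prime_one (Nat.dvd_one.mp hpn ▸ hp)
  haveI : NeZero n := ⟨hn.ne'⟩
  haveI : Fact (1 < n) := ⟨by omega⟩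
  set a : (ZMod n)ˣ := χ (Multiplicative.ofAdd (1 : ZMod 3)) with ha
  by_cases haone : a = 1
  · -- χ is trivial
    left
    have hχ : ∀ s, χ s = 1 := by
      intro s
      have hs : s = (Multiplicative.ofAdd (1 : ZMod 3)) ^ ((Multiplicative.toAdd s).val) := by
        rw [← ofAdd_nsmul, nsmul_eq_mul, mul_one, ZMod.natCast_val, ZMod.cast_id]
        exact (ofAdd_toAdd s).symm
      rw [hs, map_pow, ← ha, haone, one_pow]
    have hφ : ∀ s, ((zmodAction n).comp χ) s = 1 := by
      intro s; rw [MonoidHom.comp_apply, hχ, map_one]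
    refine ⟨{ toFun := fun g => (g.left, g.right),
              invFun := fun p => ⟨p.1, p.2⟩,
              left_inv := fun g => rfl,
              right_inv := fun p => rfl,
              map_mul' := ?_ }⟩
    intro g h
    refine Prod.ext ?_ ?_
    · simp [SemidirectProduct.mul_left, hφ]
    · simp [SemidirectProduct.mul_right]
  · right
    have key : (1 : ZMod n) + (a : ZMod n) + (a : ZMod n) ^ 2 = 0 :=
      key_lemma χ f hf haone
    -- balanced from key
    intro p hp hpn
    set r : ℕ := n.factorization p with hr
    have hr1 : r ≠ 0 := by
      have := Nat.Prime.factorization_pos_of_dvd hp hn.ne' hpn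
      omega
    set ψ := (Units.map (ZMod.castHom (Nat.ordProj_dvd n p)
        (ZMod (p ^ r))).toMonoidHom).comp χ with hψ
    have hgen : ψ (Multiplicative.ofAdd (1 : ZMod 3)) ≠ 1 := by
      intro hone
      -- then a ≡ 1 mod p^r, so 0 = 1 + a + a² ≡ 3 mod p^r, so p ∣ 3, contradiction
      have hcast : (ZMod.castHom (Nat.ordProj_dvd n p) (ZMod (p ^ r))) (a : ZMod n) = 1 := by
        have := congrArg Units.val hone
        simpa [hψ] using this
      have h3 : ((3 : ℕ) : ZMod (p ^ r)) = 0 := by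
        have := congrArg (ZMod.castHom (Nat.ordProj_dvd n p) (ZMod (p ^ r))) key
        rw [map_add, map_add, map_one, map_pow, hcast, map_zero] at this
        push_cast
        linear_combination this
      have hdvd3 : (p ^ r) ∣ 3 := (ZMod.natCast_eq_zero_iff 3 (p ^ r)).mp h3
      have hp3 : p ∣ 3 := dvd_trans (dvd_pow_self p hr1) hdvd3
      have : p = 3 := (Nat.prime_dvd_prime_iff_eq hp Nat.prime_three).mp hp3
      have := hdiv p hp hpn
      omega
    -- injectivity from hgen
    rw [injective_iff_map_eq_one]
    intro u hu
    have hcube : ψ (Multiplicative.ofAdd (1 : ZMod 3)) ^ 3 = 1 := by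
      rw [← map_pow]
      have : (Multiplicative.ofAdd (1 : ZMod 3)) ^ 3 = 1 := by decide
      rw [this, map_one]
    have hu3 : u = (Multiplicative.ofAdd (1 : ZMod 3)) ^ ((Multiplicative.toAdd u).val) := by
      rw [← ofAdd_nsmul, nsmul_eq_mul, mul_one, ZMod.natCast_val, ZMod.cast_id]
      exact (ofAdd_toAdd u).symm
    have hvlt : (Multiplicative.toAdd u).val < 3 := ZMod.val_lt _
    rw [hu3, map_pow] at hu
    set g := ψ (Multiplicative.ofAdd (1 : ZMod 3)) with hg
    interval_cases h : (Multiplicative.toAdd u).val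
    · rw [hu3]; rfl
    · exact absurd (by simpa using hu) hgen
    · exfalso
      apply hgen
      have h2 : g ^ 2 = 1 := by simpa using hu
      calc g = g ^ 3 * (g ^ 2)⁻¹ := by group
        _ = 1 := by rw [hcube, h2]; group
end

section
/- Let A be an associative unital ℚ-algebra which is a division ring with center equal to ℚ and of dimension 9 over ℚ, and let G be a finite group admitting an injective group homomorphism into the group Aˣ/ℚˣ. Then G is isomorphic to a subgroup of μ_3 × μ_3; in particular, G is abelian, its order divides 9, and its exponent divides 3. -/
/-- The central subgroup `Kˣ ⊆ Aˣ`: the units of `A` lying in the image of the structure map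
`K → A`. -/
def centralUnits (K A : Type*) [Field K] [DivisionRing A] [Algebra K A] : Subgroup Aˣ :=
  (Units.map (algebraMap K A).toMonoidHom).range

instance centralUnits_normal (K A : Type*) [Field K] [DivisionRing A] [Algebra K A] :
    (centralUnits K A).Normal := by
  constructor
  intro x hx g
  obtain ⟨k, hk⟩ := hx
  have hx' : (x : A) = algebraMap K A (k : K) := by rw [← hk]; rfl
  have h1 : g * x = x * g := by
    apply Units.ext
    rw [Units.val_mul, Units.val_mul, hx']
    exact (Algebra.commutes (k : K) (g : A)).symm
  have h2 : g * x * g⁻¹ = x := by rw [h1, mul_inv_cancel_right]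
  rw [h2]
  exact ⟨k, hk⟩

/-!
A class in `Aˣ/ℚˣ` of finite order has a lift `u` with `u³ ∈ ℚ`: if `u ∉ ℚ`, then `ℚ(u)` is a
cubic field, in which `u³ / N(u)` is a root of unity, hence rational. Two commuting classes whose
lifts have rational cubes have commuting lifts, as `ℚ` has no non-trivial cube root of unity.
The centraliser of a non-rational `u` is the cubic field `ℚ(u)`, and a trace computation shows
that its elements with rational cube are the `c uⁱ`. So `G` has exponent `3`, hence is a
`3`-group, and a non-trivial central element of `G` generates all of it.
-/

open Module Polynomial
open scoped IsMulCommutative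

section CubicField

variable {F K : Type*} [Field F] [Field K] [Algebra F K]

theorem natDegree_minpoly_eq_finrank_of_prime (hp : (finrank F K).Prime) {x : K}
    (hx : x ∉ (algebraMap F K).range) : (minpoly F x).natDegree = finrank F K := by
  have := Module.finite_of_finrank_pos hp.pos
  exact (hp.eq_one_or_self_of_dvd _ (minpoly.degree_dvd (.of_finite F x))).resolve_left
    (mt minpoly.natDegree_eq_one_iff.mp hx)

theorem sq_notMem_range_of_pow_three_mem_range {x : K} (hx : x ∉ (algebraMap F K).range)
    (hx3 : x ^ 3 ∈ (algebraMap F K).range) : x ^ 2 ∉ (algebraMap F K).range := by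
  rintro ⟨d, hd⟩
  obtain ⟨r, hr⟩ := hx3
  have hd0 : d ≠ 0 := by
    rintro rfl
    exact hx ⟨0, by rw [map_zero, eq_comm, ← pow_eq_zero_iff two_ne_zero, ← hd, map_zero]⟩
  refine hx ⟨r / d, ?_⟩
  rw [map_div₀, hr, hd, pow_succ, mul_div_cancel_left₀ _ (pow_ne_zero 2 ?_)]
  rintro rfl
  exact hx ⟨0, map_zero _⟩

theorem trace_eq_zero_of_pow_three_mem_range (h3 : finrank F K = 3) {x : K}
    (hx : x ∉ (algebraMap F K).range) (hx3 : x ^ 3 ∈ (algebraMap F K).range) :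
    Algebra.trace F K x = 0 := by
  have := Module.finite_of_finrank_pos (h3 ▸ three_pos)
  obtain ⟨r, hr⟩ := hx3
  have hdeg := natDegree_minpoly_eq_finrank_of_prime (h3 ▸ Nat.prime_three) hx
  have hmin : X ^ 3 - C r = minpoly F x :=
    eq_of_monic_of_dvd_of_natDegree_le (minpoly.monic (.of_finite F x))
      (monic_X_pow_sub_C r three_ne_zero) (minpoly.dvd F x (by simp [hr]))
      (by rw [natDegree_X_pow_sub_C, hdeg, h3])
  rw [trace_eq_finrank_mul_minpoly_nextCoeff, ← hmin,
    nextCoeff_of_natDegree_pos (by rw [natDegree_X_pow_sub_C]; norm_num)]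
  simp

theorem exists_eq_algebraMap_add_smul_add_smul_sq (h3 : finrank F K = 3) {t : K}
    (ht : t ∉ (algebraMap F K).range) (s : K) :
    ∃ c₀ c₁ c₂ : F, s = algebraMap F K c₀ + c₁ • t + c₂ • t ^ 2 := by
  have hdeg := natDegree_minpoly_eq_finrank_of_prime (h3 ▸ Nat.prime_three) ht
  rw [h3] at hdeg
  have hli : LinearIndependent F fun i : Fin 3 => t ^ (i : ℕ) := by
    rw [← hdeg]; exact linearIndependent_pow t
  let b := basisOfLinearIndependentOfCardEqFinrank hli (by simp [h3])
  refine ⟨b.repr s 0, b.repr s 1, b.repr s 2, ?_⟩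
  conv_lhs => rw [← b.sum_repr s]
  simp [b, Fin.sum_univ_three, Algebra.algebraMap_eq_smul_one]

theorem trace_algebraMap_add_smul_add_smul_sq (h3 : finrank F K = 3) {t : K}
    (ht : t ∉ (algebraMap F K).range) (ht3 : t ^ 3 ∈ (algebraMap F K).range) (c₀ c₁ c₂ : F) :
    Algebra.trace F K (algebraMap F K c₀ + c₁ • t + c₂ • t ^ 2) = 3 * c₀ := by
  have ht6 : (t ^ 2) ^ 3 ∈ (algebraMap F K).range := by
    obtain ⟨q, hq⟩ := ht3
    exact ⟨q ^ 2, by rw [map_pow, hq, ← pow_mul, ← pow_mul]⟩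
  simp only [map_add, LinearMap.map_smul, Algebra.trace_algebraMap, h3,
    trace_eq_zero_of_pow_three_mem_range h3 ht ht3,
    trace_eq_zero_of_pow_three_mem_range h3 (sq_notMem_range_of_pow_three_mem_range ht ht3) ht6]
  simp

theorem exists_eq_algebraMap_mul_pow_of_pow_three_mem_range [CharZero F] (h3 : finrank F K = 3)
    {s t : K} (ht : t ∉ (algebraMap F K).range) (ht3 : t ^ 3 ∈ (algebraMap F K).range)
    (hs3 : s ^ 3 ∈ (algebraMap F K).range) : ∃ c : F, ∃ i < 3, s = algebraMap F K c * t ^ i := by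
  by_cases hs : s ∈ (algebraMap F K).range
  · obtain ⟨c, rfl⟩ := hs
    exact ⟨c, 0, three_pos, by rw [pow_zero, mul_one]⟩
  -- `s` and `s ^ 2` are irrational with rational cubes, so both have trace zero; in the
  -- coordinates `s = c₀ + c₁ t + c₂ t ^ 2` this reads `c₀ = 0` and `c₁ c₂ = 0`.
  have hs6 : (s ^ 2) ^ 3 ∈ (algebraMap F K).range := by
    obtain ⟨r, hr⟩ := hs3
    exact ⟨r ^ 2, by rw [map_pow, hr, ← pow_mul, ← pow_mul]⟩
  have htr1 := trace_eq_zero_of_pow_three_mem_range h3 hs hs3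
  have htr2 := trace_eq_zero_of_pow_three_mem_range h3
    (sq_notMem_range_of_pow_three_mem_range hs hs3) hs6
  obtain ⟨c₀, c₁, c₂, rfl⟩ := exists_eq_algebraMap_add_smul_add_smul_sq h3 ht s
  rw [trace_algebraMap_add_smul_add_smul_sq h3 ht ht3] at htr1
  obtain rfl : c₀ = 0 := by simpa using htr1
  obtain ⟨q, hq⟩ := ht3
  have hsq : (algebraMap F K 0 + c₁ • t + c₂ • t ^ 2) ^ 2 =
      algebraMap F K (2 * q * c₁ * c₂) + (q * c₂ ^ 2) • t + (c₁ ^ 2) • t ^ 2 := by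
    simp only [Algebra.smul_def, map_mul, map_pow, map_ofNat, map_zero, hq]
    ring
  rw [hsq, trace_algebraMap_add_smul_add_smul_sq h3 ht ⟨q, hq⟩] at htr2
  have hq0 : q ≠ 0 := by
    rintro rfl
    exact ht ⟨0, by rw [map_zero, eq_comm, ← pow_eq_zero_iff three_ne_zero, ← hq, map_zero]⟩
  rcases mul_eq_zero.mp (by simpa [hq0] using htr2 : c₁ * c₂ = 0) with rfl | rfl
  · exact ⟨c₂, 2, by norm_num, by simp [Algebra.smul_def]⟩
  · exact ⟨c₁, 1, by norm_num, by simp [Algebra.smul_def]⟩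

end CubicField

section OddRational

variable {K : Type*} [Field K] [Algebra ℚ K]

theorem mem_range_of_pow_eq_one (hodd : Odd (finrank ℚ K)) {w : K} {n : ℕ} (hn : 0 < n)
    (hw : w ^ n = 1) : w ∈ (algebraMap ℚ K).range := by
  have := Module.finite_of_finrank_pos hodd.pos
  have := charZero_of_injective_algebraMap (algebraMap ℚ K).injective
  have hm : 0 < orderOf w := (isOfFinOrder_iff_pow_eq_one.mpr ⟨n, hn, hw⟩).orderOf_pos
  have hcyc := cyclotomic_eq_minpoly_rat (IsPrimitiveRoot.orderOf w) hm
  -- `cyclotomic_eq_minpoly_rat` is stated for the canonical `ℚ`-algebra structure on `K`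
  rw [Subsingleton.elim (DivisionRing.toRatAlgebra : Algebra ℚ K) ‹_›] at hcyc
  have hdvd := minpoly.degree_dvd (IsIntegral.of_finite ℚ w)
  rw [← hcyc, natDegree_cyclotomic] at hdvd
  have hle : orderOf w ≤ 2 := by
    by_contra! h
    exact Nat.not_even_iff_odd.mpr (hodd.of_dvd_nat hdvd) (Nat.totient_even h)
  rw [← minpoly.natDegree_eq_one_iff, ← hcyc, natDegree_cyclotomic]
  interval_cases orderOf w <;> rfl

theorem pow_three_mem_range_of_pow_mem_range (h3 : finrank ℚ K = 3) {x : K} {n : ℕ} (hn : 0 < n)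
    (hx : x ^ n ∈ (algebraMap ℚ K).range) : x ^ 3 ∈ (algebraMap ℚ K).range := by
  obtain rfl | hx0 := eq_or_ne x 0
  · exact ⟨0, by simp⟩
  obtain ⟨q, hq⟩ := hx
  have hN : Algebra.norm ℚ x ^ n = q ^ 3 := by
    rw [← map_pow, ← hq, Algebra.norm_algebraMap, h3]
  have hq0 : q ≠ 0 := by
    rintro rfl
    exact pow_ne_zero n hx0 (by rw [← hq, map_zero])
  have := Module.finite_of_finrank_pos (h3 ▸ three_pos)
  have hN0 : algebraMap ℚ K (Algebra.norm ℚ x) ≠ 0 :=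
    (_root_.map_ne_zero _).mpr (Algebra.norm_ne_zero_iff.mpr hx0)
  have hw : (x ^ 3 / algebraMap ℚ K (Algebra.norm ℚ x)) ^ n = 1 := by
    rw [div_pow, ← pow_mul, mul_comm, pow_mul, ← hq, ← map_pow, ← map_pow, hN, div_self]
    exact (_root_.map_ne_zero _).mpr (pow_ne_zero 3 hq0)
  obtain ⟨c, hc⟩ := mem_range_of_pow_eq_one (h3 ▸ by decide) hn hw
  exact ⟨c * Algebra.norm ℚ x, by rw [map_mul, hc, div_mul_cancel₀ _ hN0]⟩

end OddRational

section CentralDivisionAlgebra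

variable {F A : Type*} [Field F] [DivisionRing A] [Algebra F A]

noncomputable abbrev Subalgebra.fieldOfIsMulCommutative [FiniteDimensional F A]
    (S : Subalgebra F A) [IsMulCommutative S] : Field S :=
  (isField_of_isIntegral_of_isField' (Field.toIsField F)).toField

theorem Subalgebra.finrank_dvd_finrank [FiniteDimensional F A] (S : Subalgebra F A) :
    finrank F S ∣ finrank F A :=
  let := divisionRingOfFiniteDimensional F S
  Module.finrank_dvd_finrank_right F S A

theorem Subalgebra.coe_mem_range_algebraMap_iff (S : Subalgebra F A) {x : S} :
    (x : A) ∈ (algebraMap F A).range ↔ x ∈ (algebraMap F S).range := by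
  simp [Subtype.ext_iff]

theorem Subalgebra.finrank_eq_one_or_eq_of_isMulCommutative {p : ℕ} (hp : p.Prime)
    (hcenter : Subalgebra.center F A = ⊥) (hrank : finrank F A = p ^ 2)
    (S : Subalgebra F A) [IsMulCommutative S] : finrank F S = 1 ∨ finrank F S = p := by
  have := Module.finite_of_finrank_pos (hrank ▸ pow_pos hp.pos 2)
  obtain ⟨k, hk, hSk⟩ := (Nat.dvd_prime_pow hp).mp (hrank ▸ S.finrank_dvd_finrank)
  interval_cases k
  · exact .inl hSk
  · exact .inr (by simpa using hSk)
  · have htop : S = ⊤ := Algebra.toSubmodule_eq_top.mp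
      (Submodule.eq_top_of_finrank_eq (S.finrank_toSubmodule.trans (hSk.trans hrank.symm)))
    have hbot : S = ⊥ := le_bot_iff.mp <| hcenter ▸ fun x hx ↦
      Subalgebra.mem_center_iff.mpr fun y ↦ setLike_mul_comm (htop ▸ Algebra.mem_top) hx
    rw [hbot, Subalgebra.finrank_bot, eq_comm] at hSk
    exact absurd hSk (Nat.one_lt_pow two_ne_zero hp.one_lt).ne'

theorem Subalgebra.finrank_eq_of_isMulCommutative_of_mem {p : ℕ} (hp : p.Prime)
    (hcenter : Subalgebra.center F A = ⊥) (hrank : finrank F A = p ^ 2) {a : A}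
    (ha : a ∉ (algebraMap F A).range) {S : Subalgebra F A} [IsMulCommutative S] (haS : a ∈ S) :
    finrank F S = p :=
  (S.finrank_eq_one_or_eq_of_isMulCommutative hp hcenter hrank).resolve_left fun h ↦
    ha (Algebra.mem_bot.mp (Subalgebra.eq_bot_of_finrank_one h ▸ haS))

theorem mem_adjoin_singleton_of_commute {p : ℕ} (hp : p.Prime)
    (hcenter : Subalgebra.center F A = ⊥) (hrank : finrank F A = p ^ 2) {a b : A}
    (ha : a ∉ (algebraMap F A).range) (hab : Commute a b) : b ∈ Algebra.adjoin F {a} := by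
  have : IsMulCommutative (Algebra.adjoin F {a, b}) := Algebra.isMulCommutative_adjoin F (by
    simp only [Set.mem_insert_iff, Set.mem_singleton_iff]
    rintro x (rfl | rfl) y (rfl | rfl) <;> first | rfl | exact hab | exact hab.symm)
  have hle : Algebra.adjoin F {a} ≤ Algebra.adjoin F {a, b} := Algebra.adjoin_mono (by simp)
  have haS := Algebra.self_mem_adjoin_singleton F a
  have := Module.finite_of_finrank_pos (hrank ▸ pow_pos hp.pos 2)
  have heq := Subalgebra.eq_of_le_of_finrank_eq hle
    ((Subalgebra.finrank_eq_of_isMulCommutative_of_mem hp hcenter hrank ha haS).trans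
      (Subalgebra.finrank_eq_of_isMulCommutative_of_mem hp hcenter hrank ha (hle haS)).symm)
  exact heq ▸ Algebra.subset_adjoin (by simp)

theorem exists_eq_algebraMap_mul_pow_of_commute [CharZero F]
    (hcenter : Subalgebra.center F A = ⊥) (hrank : finrank F A = 9) {a b : A}
    (ha : a ∉ (algebraMap F A).range) (ha3 : a ^ 3 ∈ (algebraMap F A).range)
    (hb3 : b ^ 3 ∈ (algebraMap F A).range) (hab : Commute a b) :
    ∃ c : F, ∃ i < 3, b = algebraMap F A c * a ^ i := by
  replace hrank : finrank F A = 3 ^ 2 := hrank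
  have := Module.finite_of_finrank_pos (hrank ▸ pow_pos three_pos 2)
  let S := Algebra.adjoin F {a}
  let := S.fieldOfIsMulCommutative
  let x : S := ⟨a, Algebra.self_mem_adjoin_singleton F a⟩
  let y : S := ⟨b, mem_adjoin_singleton_of_commute Nat.prime_three hcenter hrank ha hab⟩
  have h3 : finrank F S = 3 :=
    Subalgebra.finrank_eq_of_isMulCommutative_of_mem Nat.prime_three hcenter hrank ha x.2
  obtain ⟨c, i, hi, hyx⟩ := exists_eq_algebraMap_mul_pow_of_pow_three_mem_range h3 (s := y) (t := x)
    (mt S.coe_mem_range_algebraMap_iff.mpr ha) (S.coe_mem_range_algebraMap_iff.mp ha3)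
    (S.coe_mem_range_algebraMap_iff.mp hb3)
  exact ⟨c, i, hi, congrArg Subtype.val hyx⟩

end CentralDivisionAlgebra

theorem commute_of_commute_mk {G : Type*} [Group G] {N : Subgroup G} [N.Normal]
    (hN : N ≤ Subgroup.center G) {n : ℕ} (htors : ∀ z ∈ N, z ^ n = 1 → z = 1) {u v : G}
    (hv : v ^ n ∈ Subgroup.center G) (huv : Commute (u : G ⧸ N) v) : Commute u v := by
  have hzN : (u * v)⁻¹ * (v * u) ∈ N := QuotientGroup.eq.mp (by simpa using huv.eq)
  set z := (u * v)⁻¹ * (v * u)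
  have hconj : u⁻¹ * v * u⁻¹⁻¹ = v * z := by simp only [z]; group
  have hvz : (v * z) ^ n = v ^ n * z ^ n :=
    Commute.mul_pow (Subgroup.mem_center_iff.mp (hN hzN) v) n
  have hvn : (v * z) ^ n = v ^ n := by
    rw [← hconj, conj_pow, inv_inv, mul_assoc, ← Subgroup.mem_center_iff.mp hv u,
      inv_mul_cancel_left]
  exact inv_mul_eq_one.mp (htors z hzN (mul_eq_left.mp (hvz.symm.trans hvn)))

section CentralUnits

variable {K A : Type*} [Field K] [DivisionRing A] [Algebra K A]

theorem mem_centralUnits_iff {u : Aˣ} :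
    u ∈ centralUnits K A ↔ (u : A) ∈ (algebraMap K A).range := by
  constructor
  · rintro ⟨k, rfl⟩
    exact ⟨k, rfl⟩
  · rintro ⟨c, hc⟩
    have hc0 : c ≠ 0 := by
      rintro rfl
      exact u.ne_zero (by rw [← hc, map_zero])
    exact ⟨Units.mk0 c hc0, Units.ext hc⟩

theorem centralUnits_le_center : centralUnits K A ≤ Subgroup.center Aˣ := by
  rintro _ ⟨k, rfl⟩
  exact Subgroup.mem_center_iff.mpr fun g ↦ Units.ext (Algebra.commutes (k : K) (g : A)).symm

end CentralUnits

section RationalDegreeNine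

variable {A : Type*} [DivisionRing A] [Algebra ℚ A]

theorem pow_three_mem_range_of_pow_mem_range_of_finrank_eq_nine
    (hcenter : Subalgebra.center ℚ A = ⊥) (hrank : finrank ℚ A = 9) {a : A} {n : ℕ} (hn : 0 < n)
    (ha : a ^ n ∈ (algebraMap ℚ A).range) : a ^ 3 ∈ (algebraMap ℚ A).range := by
  by_cases haℚ : a ∈ (algebraMap ℚ A).range
  · obtain ⟨c, rfl⟩ := haℚ
    exact ⟨c ^ 3, map_pow _ c 3⟩
  replace hrank : finrank ℚ A = 3 ^ 2 := hrank
  have := Module.finite_of_finrank_pos (hrank ▸ pow_pos three_pos 2)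
  let S := Algebra.adjoin ℚ {a}
  let := S.fieldOfIsMulCommutative
  let x : S := ⟨a, Algebra.self_mem_adjoin_singleton ℚ a⟩
  have h3 : finrank ℚ S = 3 :=
    Subalgebra.finrank_eq_of_isMulCommutative_of_mem Nat.prime_three hcenter hrank haℚ x.2
  exact S.coe_mem_range_algebraMap_iff.mpr
    (pow_three_mem_range_of_pow_mem_range h3 hn (x := x) (S.coe_mem_range_algebraMap_iff.mp ha))

theorem eq_one_of_pow_eq_one_of_mem_centralUnits {n : ℕ} (hn : Odd n) {z : Aˣ}
    (hz : z ∈ centralUnits ℚ A) (hzn : z ^ n = 1) : z = 1 := by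
  obtain ⟨k, rfl⟩ := hz
  have hkn : k ^ n = 1 :=
    Units.map_injective (f := (algebraMap ℚ A).toMonoidHom) (algebraMap ℚ A).injective
      (by rw [map_pow, hzn, map_one])
  have hk : k = 1 := Units.ext <| hn.pow_inj.mp <| by
    rw [Units.val_one, one_pow, ← Units.val_pow_eq_pow_val, hkn, Units.val_one]
  rw [hk, map_one]

theorem pow_three_eq_one_of_isOfFinOrder (hcenter : Subalgebra.center ℚ A = ⊥)
    (hrank : finrank ℚ A = 9) {x : Aˣ ⧸ centralUnits ℚ A} (hx : IsOfFinOrder x) : x ^ 3 = 1 := by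
  obtain ⟨u, rfl⟩ := QuotientGroup.mk_surjective x
  obtain ⟨n, hn, hun⟩ := isOfFinOrder_iff_pow_eq_one.mp hx
  rw [← QuotientGroup.mk_pow, QuotientGroup.eq_one_iff, mem_centralUnits_iff,
    Units.val_pow_eq_pow_val] at hun ⊢
  exact pow_three_mem_range_of_pow_mem_range_of_finrank_eq_nine hcenter hrank hn hun

theorem exists_eq_pow_of_commute (hcenter : Subalgebra.center ℚ A = ⊥)
    (hrank : finrank ℚ A = 9) {x y : Aˣ ⧸ centralUnits ℚ A} (hx1 : x ≠ 1) (hx : IsOfFinOrder x)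
    (hy : IsOfFinOrder y) (hxy : Commute x y) : ∃ i : ℕ, y = x ^ i := by
  obtain ⟨u, rfl⟩ := QuotientGroup.mk_surjective x
  obtain ⟨v, rfl⟩ := QuotientGroup.mk_surjective y
  have hu3 := pow_three_eq_one_of_isOfFinOrder hcenter hrank hx
  have hv3 := pow_three_eq_one_of_isOfFinOrder hcenter hrank hy
  rw [← QuotientGroup.mk_pow, QuotientGroup.eq_one_iff] at hu3 hv3
  have huv : Commute u v := commute_of_commute_mk centralUnits_le_center
    (fun _ ↦ eq_one_of_pow_eq_one_of_mem_centralUnits (by decide))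
    (centralUnits_le_center hv3) hxy
  rw [ne_eq, QuotientGroup.eq_one_iff, mem_centralUnits_iff] at hx1
  rw [mem_centralUnits_iff, Units.val_pow_eq_pow_val] at hu3 hv3
  obtain ⟨c, i, -, hc⟩ := exists_eq_algebraMap_mul_pow_of_commute hcenter hrank hx1 hu3 hv3
    huv.units_val
  refine ⟨i, ?_⟩
  rw [← QuotientGroup.mk_pow, QuotientGroup.eq_iff_div_mem, mem_centralUnits_iff]
  exact ⟨c, by
    rw [Units.val_div_eq_div_val, Units.val_pow_eq_pow_val, hc,
      mul_div_cancel_right₀ _ (pow_ne_zero i u.ne_zero)]⟩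

end RationalDegreeNine

/-- Let `A` be a central division algebra of dimension `9` over `ℚ` and let `G` be a finite
group admitting an injective group homomorphism into the group `Aˣ/ℚˣ` (the automorphism
group of the non-trivial Severi–Brauer surface over `ℚ` corresponding to `A`). Then `G` is
isomorphic to a subgroup of `μ₃ × μ₃`. -/
theorem stmt_19 (A : Type) [DivisionRing A] [Algebra ℚ A]
    (hcenter : Subalgebra.center ℚ A = ⊥) (hrank : Module.finrank ℚ A = 9)
    (G : Type) [Group G] [Finite G]
    (f : G →* Aˣ ⧸ centralUnits ℚ A) (hf : Function.Injective f) :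
    ∃ h : G →* Multiplicative (ZMod 3 × ZMod 3), Function.Injective h := by
  have hfin (g : G) : IsOfFinOrder (f g) := f.isOfFinOrder (isOfFinOrder_of_finite g)
  have hexp (g : G) : g ^ 3 = 1 :=
    hf (by rw [map_pow, map_one, pow_three_eq_one_of_isOfFinOrder hcenter hrank (hfin g)])
  rcases subsingleton_or_nontrivial G with hG | hG
  · exact ⟨1, Function.injective_of_subsingleton _⟩
  have := IsPGroup.center_nontrivial (p := 3) fun g ↦ ⟨1, by rw [pow_one, hexp]⟩
  obtain ⟨⟨z, hz⟩, hz1⟩ := exists_ne (1 : Subgroup.center G)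
  replace hz1 : z ≠ 1 := fun h ↦ hz1 (Subtype.ext h)
  have hgen (g : G) : g ∈ Subgroup.zpowers z := by
    obtain ⟨i, hi⟩ := exists_eq_pow_of_commute hcenter hrank ((map_ne_one_iff f hf).mpr hz1)
      (hfin z) (hfin g) (Commute.map (Subgroup.mem_center_iff.mp hz g) f).symm
    rw [← map_pow, hf.eq_iff] at hi
    exact hi ▸ Subgroup.npow_mem_zpowers z i
  have hcard : Nat.card G = 3 := by
    rw [← orderOf_eq_card_of_forall_mem_zpowers hgen, orderOf_eq_prime (hexp z) hz1]
  let e : G ≃* Multiplicative (ZMod 3) := mulEquivOfPrimeCardEq hcard (by simp)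
  refine ⟨(AddMonoidHom.inl (ZMod 3) (ZMod 3)).toMultiplicative.comp e.toMonoidHom, ?_⟩
  exact (Prod.mk_left_injective (0 : ZMod 3)).comp e.injective
end
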